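/- arXiv:2006.06486 — 6 statements merged into one kernel-verified Lean document; each statement's English description precedes it below -/
import Mathlib

section
/- Let (A_i)_{i≥1} be i.i.d. Bernoulli(2δ) with δ ∈ (0,1/16), and (G_i)_{i≥1} i.i.d. geometric random variables on ℕ₀ with P(G_1 = k) = 2^{-(k+1)}, independent of the A_i. Then for every k ∈ ℕ and j ∈ ℕ, P(Σ_{i=1}^k A_i (G_i + 1) > k - j) ≤ (3/2)^j (5/6)^k. -/
open MeasureTheory ProbabilityTheory
open scoped ENNReal

/-! A Chernoff bound with base `3/2`, i.e. `λ = log (3/2)`. Writing `N i = A i * (G i + 1)`,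
Markov's inequality and independence give
`(3/2)^(k-j) * P (k - j ≤ ∑ N i) ≤ ∏ E[(3/2)^(N i)]`. Splitting on the Bernoulli variable,
`E[(3/2)^(N i)] = (1 - 2δ) + 2δ * E[(3/2)^(G i + 1)] = 1 - 2δ + 2δ * 3 = 1 + 4δ < 5/4`,
and `5/4 = (3/2) * (5/6)`. -/

section

variable {Ω : Type*} [MeasurableSpace Ω] {P : Measure Ω}

theorem lintegral_comp_nat_eq_tsum {X : Ω → ℕ} (hX : Measurable X) (f : ℕ → ℝ≥0∞) :
    ∫⁻ ω, f (X ω) ∂P = ∑' n, f n * P {ω | X ω = n} := by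
  rw [← lintegral_map (measurable_of_countable f) hX, lintegral_countable']
  congr! with n
  exact Measure.map_apply hX (measurableSet_singleton n)

theorem lintegral_ite_eq_measure {X : Ω → ℕ} (hX : Measurable X) (a : ℕ) :
    ∫⁻ ω, (if X ω = a then 1 else 0) ∂P = P {ω | X ω = a} := by
  rw [lintegral_comp_nat_eq_tsum hX (fun n => if n = a then 1 else 0)]
  simp

theorem lintegral_pow_mul_of_bernoulli [IsProbabilityMeasure P] {A G : Ω → ℕ}
    (hA : Measurable A) (hG : Measurable G) (hA01 : ∀ ω, A ω ≤ 1) {q : ℝ} (hq : 0 ≤ q)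
    (hlaw : P {ω | A ω = 1} = ENNReal.ofReal q) (hAG : IndepFun A G P) (x : ℝ≥0∞) :
    ∫⁻ ω, x ^ (A ω * G ω) ∂P
      = ENNReal.ofReal (1 - q) + ENNReal.ofReal q * ∫⁻ ω, x ^ G ω ∂P := by
  have hsplit : ∀ ω, x ^ (A ω * G ω)
      = (if A ω = 0 then 1 else 0) + (if A ω = 1 then 1 else 0) * x ^ G ω := by
    intro ω
    rcases Nat.le_one_iff_eq_zero_or_eq_one.mp (hA01 ω) with h | h <;> simp [h]
  have hlaw₀ : P {ω | A ω = 0} = ENNReal.ofReal (1 - q) := by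
    have hcompl : {ω | A ω = 0} = {ω | A ω = 1}ᶜ := by
      ext ω
      have hω := hA01 ω
      show A ω = 0 ↔ ¬A ω = 1
      omega
    have hmeas : MeasurableSet {ω | A ω = 1} := hA (measurableSet_singleton 1)
    rw [hcompl, prob_compl_eq_one_sub hmeas, hlaw, ENNReal.ofReal_sub 1 hq, ENNReal.ofReal_one]
  have h₀ : Measurable fun ω => if A ω = 0 then (1 : ℝ≥0∞) else 0 :=
    (measurable_of_countable fun a : ℕ => if a = 0 then (1 : ℝ≥0∞) else 0).comp hA
  have h₁ : Measurable fun a : ℕ => if a = 1 then (1 : ℝ≥0∞) else 0 := measurable_of_countable _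
  have hx : Measurable fun n : ℕ => x ^ n := measurable_of_countable _
  simp_rw [hsplit]
  rw [lintegral_add_left h₀, lintegral_mul_eq_lintegral_mul_lintegral_of_indepFun''
      (f := fun ω => if A ω = 1 then (1 : ℝ≥0∞) else 0) (g := fun ω => x ^ G ω)
      (h₁.comp hA).aemeasurable (hx.comp hG).aemeasurable (hAG.comp h₁ hx),
    lintegral_ite_eq_measure hA, lintegral_ite_eq_measure hA, hlaw₀, hlaw]

theorem lintegral_ofReal_pow_succ_of_geometric {G : Ω → ℕ} (hG : Measurable G)
    (hlaw : ∀ n, P {ω | G ω = n} = ENNReal.ofReal ((1 / 2 : ℝ) ^ (n + 1)))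
    {r : ℝ} (hr₀ : 0 ≤ r) (hr₂ : r < 2) :
    ∫⁻ ω, ENNReal.ofReal r ^ (G ω + 1) ∂P = ENNReal.ofReal (r / (2 - r)) := by
  have hterm : ∀ n : ℕ, ENNReal.ofReal r ^ (n + 1) * P {ω | G ω = n}
      = ENNReal.ofReal (r / 2 * (r / 2) ^ n) := by
    intro n
    rw [hlaw, ← ENNReal.ofReal_pow hr₀, ← ENNReal.ofReal_mul (by positivity), ← mul_pow,
      ← pow_succ']
    ring_nf
  have hr : r / 2 < 1 := by linarith
  have hsum := (summable_geometric_of_lt_one (by positivity) hr).mul_left (r / 2)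
  rw [lintegral_comp_nat_eq_tsum hG (fun n => ENNReal.ofReal r ^ (n + 1))]
  simp_rw [hterm]
  rw [← ENNReal.ofReal_tsum_of_nonneg (fun n => by positivity) hsum, tsum_mul_left,
    tsum_geometric_of_lt_one (by positivity) hr]
  congr 1
  field_simp

theorem pow_mul_measure_le_sum_le_prod_lintegral {ι : Type*} {X : ι → Ω → ℕ}
    (hX : ∀ i, Measurable (X i)) (hindep : iIndepFun X P) {x : ℝ≥0∞} (hx : 1 ≤ x)
    (s : Finset ι) (m : ℕ) :
    x ^ m * P {ω | m ≤ ∑ i ∈ s, X i ω} ≤ ∏ i ∈ s, ∫⁻ ω, x ^ X i ω ∂P := by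
  have hmeas : ∀ i, Measurable fun ω => x ^ X i ω :=
    fun i => (measurable_of_countable _).comp (hX i)
  rw [← lintegral_prod_eq_prod_lintegral_of_indepFun s (fun i ω => x ^ X i ω)
    (hindep.comp (fun _ n => x ^ n) fun _ => measurable_of_countable _) hmeas]
  calc x ^ m * P {ω | m ≤ ∑ i ∈ s, X i ω}
      ≤ x ^ m * P {ω | x ^ m ≤ ∏ i ∈ s, x ^ X i ω} := by
        refine mul_le_mul_right (measure_mono fun ω (hω : m ≤ ∑ i ∈ s, X i ω) => ?_) _
        show x ^ m ≤ ∏ i ∈ s, x ^ X i ω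
        rw [Finset.prod_pow_eq_pow_sum]
        exact pow_right_mono₀ hx hω
    _ ≤ _ := mul_meas_ge_le_lintegral₀
      (Finset.aemeasurable_fun_prod _ fun i _ => (hmeas i).aemeasurable) _

theorem Nat.tsub_le_of_cast_sub_lt {k j n : ℕ} (h : (k : ℝ) - j < n) : k - j ≤ n := by
  have : k < n + j := by exact_mod_cast (by linarith : (k : ℝ) < n + j)
  omega

theorem le_pow_mul_pow_of_pow_tsub_mul_le {a b p : ℝ} (ha : 1 ≤ a) (hb : 0 ≤ b) {k j : ℕ}
    (h : a ^ (k - j) * p ≤ (a * b) ^ k) : p ≤ a ^ j * b ^ k := by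
  refine le_of_mul_le_mul_left (h.trans ?_) (by positivity : 0 < a ^ (k - j))
  calc (a * b) ^ k = a ^ k * b ^ k := mul_pow a b k
    _ ≤ a ^ (k - j + j) * b ^ k := by gcongr; omega
    _ = a ^ (k - j) * (a ^ j * b ^ k) := by rw [pow_add, mul_assoc]

end

theorem stmt_5_general {Ω : Type*} [MeasurableSpace Ω] (P : Measure Ω) [IsProbabilityMeasure P]
    (δ : ℝ) (hδ : δ ∈ Set.Ioo (0 : ℝ) (1 / 16))
    (A G : ℕ → Ω → ℕ)
    (hAmeas : ∀ i, Measurable (A i)) (hGmeas : ∀ i, Measurable (G i))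
    (hA01 : ∀ i ω, A i ω ≤ 1)
    (hA : ∀ i, P {ω | A i ω = 1} = ENNReal.ofReal (2 * δ))
    (hG : ∀ i k, P {ω | G i ω = k} = ENNReal.ofReal ((1 / 2 : ℝ) ^ (k + 1)))
    (hindep : iIndepFun (fun (i : ℕ) (ω : Ω) => (A i ω, G i ω)) P)
    (hAG : ∀ i, IndepFun (A i) (G i) P)
    (k j : ℕ) :
    (P {ω | (k : ℝ) - j < ∑ i ∈ Finset.range k, (A i ω : ℝ) * ((G i ω : ℝ) + 1)}).toReal
      ≤ (3 / 2 : ℝ) ^ j * (5 / 6 : ℝ) ^ k := by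
  obtain ⟨hδ₀, hδ₁⟩ := hδ
  set x := ENNReal.ofReal (3 / 2)
  have hmgf : ∀ i, ∫⁻ ω, x ^ (A i ω * (G i ω + 1)) ∂P ≤ ENNReal.ofReal (3 / 2 * (5 / 6)) := by
    intro i
    rw [lintegral_pow_mul_of_bernoulli (hAmeas i) ((hGmeas i).add_const 1) (hA01 i)
        (by positivity) (hA i) ((hAG i).comp measurable_id (measurable_add_const 1)),
      lintegral_ofReal_pow_succ_of_geometric (hGmeas i) (hG i) (by norm_num) (by norm_num),
      ← ENNReal.ofReal_mul (by positivity), ← ENNReal.ofReal_add (by linarith) (by positivity)]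
    exact ENNReal.ofReal_le_ofReal (by linarith)
  set S := {ω | (k : ℝ) - j < ∑ i ∈ Finset.range k, (A i ω : ℝ) * ((G i ω : ℝ) + 1)}
  -- truncated subtraction makes this cover `k < j` as well
  have hsub : S ⊆ {ω | k - j ≤ ∑ i ∈ Finset.range k, A i ω * (G i ω + 1)} :=
    fun ω hω => Nat.tsub_le_of_cast_sub_lt (by push_cast; exact hω)
  have hchernoff := (pow_mul_measure_le_sum_le_prod_lintegral
    (X := fun i ω => A i ω * (G i ω + 1)) (fun i => (hAmeas i).mul ((hGmeas i).add_const 1))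
    (hindep.comp (fun _ p => p.1 * (p.2 + 1)) fun _ => measurable_of_countable _)
    (ENNReal.one_le_ofReal.mpr (by norm_num) : 1 ≤ x) (Finset.range k) (k - j)).trans
    (Finset.prod_le_pow_card _ _ _ fun i _ => hmgf i)
  have hbound : ENNReal.ofReal ((3 / 2) ^ (k - j)) * P S
      ≤ ENNReal.ofReal ((3 / 2 * (5 / 6)) ^ k) := by
    rw [ENNReal.ofReal_pow (by norm_num), ENNReal.ofReal_pow (by norm_num)]
    simpa using (mul_le_mul_right (measure_mono hsub) _).trans hchernoff
  refine le_pow_mul_pow_of_pow_tsub_mul_le (by norm_num) (by norm_num) ?_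
  have := ENNReal.toReal_mono ENNReal.ofReal_ne_top hbound
  rwa [ENNReal.toReal_mul, ENNReal.toReal_ofReal (by positivity),
    ENNReal.toReal_ofReal (by positivity)] at this

/-- Chernoff bound: if `(A_i)` are i.i.d. Bernoulli(2δ) with `δ ∈ (0,1/16)` and `(G_i)` are
i.i.d. geometric on `ℕ₀` with `P(G_i = k) = 2^{-(k+1)}`, all independent, then for `k, j ≥ 1`,
`P(Σ_{i=1}^k A_i (G_i + 1) > k - j) ≤ (3/2)^j (5/6)^k`. -/
theorem stmt_5 {Ω : Type*} [MeasurableSpace Ω] (P : Measure Ω) [IsProbabilityMeasure P]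
    (δ : ℝ) (hδ : δ ∈ Set.Ioo (0 : ℝ) (1 / 16))
    (A G : ℕ → Ω → ℕ)
    (hAmeas : ∀ i, Measurable (A i)) (hGmeas : ∀ i, Measurable (G i))
    (hA01 : ∀ i ω, A i ω ≤ 1)
    (hA : ∀ i, P {ω | A i ω = 1} = ENNReal.ofReal (2 * δ))
    (hG : ∀ i k, P {ω | G i ω = k} = ENNReal.ofReal ((1 / 2 : ℝ) ^ (k + 1)))
    (hindep : iIndepFun (fun (i : ℕ) (ω : Ω) => (A i ω, G i ω)) P)
    (hAG : ∀ i, IndepFun (A i) (G i) P)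
    (k j : ℕ) (hk : 1 ≤ k) (hj : 1 ≤ j) :
    (P {ω | (k : ℝ) - j < ∑ i ∈ Finset.range k, (A i ω : ℝ) * ((G i ω : ℝ) + 1)}).toReal
      ≤ (3 / 2 : ℝ) ^ j * (5 / 6 : ℝ) ^ k :=
  stmt_5_general P δ hδ A G hAmeas hGmeas hA01 hA hG hindep hAG k j
end

section
/- Let (Y_n)_{n≥0} be the Markov chain on ℕ₀ with transition probabilities: from state 0, it stays at 0 with probability 1-δ and jumps to j ≥ 1 with probability δ 2^{-j}; from state i ≥ 1, it moves to i-1 with probability 1-2δ and to i+j (j ≥ 0) with probability δ 2^{-j}, where δ ∈ (0, 1/16). Let m_j be the expected first return/hitting time of state 0 started from j. Then m_j ≤ 1 + 5·(3/2)^j for every j ≥ 1, and m_0 ≤ 1 + 15δ. -/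
/-!
Foster–Lyapunov drift argument with `V(j) = j`. From `i ≥ 1` the chain drifts down by
`1 - 4δ` on average, from `0` it drifts up by `2δ`. Summing the drift over the survival events
`{T > n}` (`T` the first hitting time of `0` after time `0`) telescopes to
`(1 - 4δ) ∑ₙ P(Yₙ ≥ 1, T > n) ≤ Y₀ + 2δ·1{Y₀ = 0}`, while `E[T] = ∑ₙ P(T > n)`.
Hence `m_j ≤ j / (1 - 4δ)` for `j ≥ 1` and `m_0 ≤ 1 + 2δ / (1 - 4δ)`.
-/

open MeasureTheory
open scoped ENNReal

/-- The transition probabilities of the comparison Markov chain on `ℕ₀`: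
from `0`, stay at `0` with probability `1-δ` and jump to `j ≥ 1` with probability `δ 2^{-j}`;
from `i ≥ 1`, move to `i-1` with probability `1-2δ` and to `i+j` (`j ≥ 0`)
with probability `δ 2^{-j}`. -/
noncomputable def pKer (δ : ℝ) (i j : ℕ) : ℝ :=
  if i = 0 then (if j = 0 then 1 - δ else δ * (1 / 2) ^ j)
  else if j + 1 = i then 1 - 2 * δ
  else if i ≤ j then δ * (1 / 2) ^ (j - i)
  else 0

theorem ENNReal.tsum_le_add_tsum_of_succ_add_le {u r s : ℕ → ℝ≥0∞}
    (h : ∀ n, u (n + 1) + r n ≤ u n + s n) : ∑' n, r n ≤ u 0 + ∑' n, s n := by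
  have partial_sums : ∀ N, u N + ∑ n ∈ Finset.range N, r n ≤ u 0 + ∑ n ∈ Finset.range N, s n := by
    intro N
    induction N with
    | zero => simp
    | succ N ih =>
      simp only [Finset.sum_range_succ]
      calc u (N + 1) + (∑ n ∈ Finset.range N, r n + r N)
          = (u (N + 1) + r N) + ∑ n ∈ Finset.range N, r n := by ring
        _ ≤ (u N + s N) + ∑ n ∈ Finset.range N, r n := add_le_add (h N) le_rfl
        _ = (u N + ∑ n ∈ Finset.range N, r n) + s N := by ring
        _ ≤ (u 0 + ∑ n ∈ Finset.range N, s n) + s N := by gcongr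
        _ = u 0 + (∑ n ∈ Finset.range N, s n + s N) := by ring
  rw [ENNReal.tsum_eq_iSup_nat]
  refine iSup_le fun N => (le_add_self.trans (partial_sums N)).trans ?_
  gcongr
  exact ENNReal.sum_le_tsum _

theorem ENNReal.le_ofReal_of_ofReal_mul_le {a b B : ℝ} {R : ℝ≥0∞} (ha : 0 < a) (hb : b ≤ a * B)
    (h : ENNReal.ofReal a * R ≤ ENNReal.ofReal b) : R ≤ ENNReal.ofReal B := by
  rw [← ENNReal.mul_le_mul_iff_right (ENNReal.ofReal_pos.2 ha).ne' ENNReal.ofReal_ne_top,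
    ← ENNReal.ofReal_mul ha.le]
  exact h.trans (ENNReal.ofReal_le_ofReal hb)

section HittingTime

variable {Ω : Type*} {Y : ℕ → Ω → ℕ}

/-- The event `T > n`; it is indexed by `Fin (n + 1)` to match the Markov property. -/
def avoidsZeroUpTo (Y : ℕ → Ω → ℕ) (n : ℕ) : Set Ω :=
  {ω | ∀ m : Fin (n + 1), (m : ℕ) ≠ 0 → Y m ω ≠ 0}

theorem avoidsZeroUpTo_zero : avoidsZeroUpTo Y 0 = Set.univ :=
  Set.eq_univ_of_forall fun _ m hm => absurd (Fin.val_eq_zero m) hm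

theorem avoidsZeroUpTo_succ_subset (n : ℕ) : avoidsZeroUpTo Y (n + 1) ⊆ avoidsZeroUpTo Y n :=
  fun _ h m => h m.castSucc

theorem mem_avoidsZeroUpTo_iff {n : ℕ} {ω : Ω} :
    ω ∈ avoidsZeroUpTo Y n ↔ ∀ m, 1 ≤ m → m ≤ n → Y m ω ≠ 0 :=
  ⟨fun h m hm1 hmn => h ⟨m, Nat.lt_succ_of_le hmn⟩ (Nat.one_le_iff_ne_zero.1 hm1),
    fun h m hm => h m (Nat.one_le_iff_ne_zero.2 hm) (Nat.le_of_lt_succ m.2)⟩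

theorem setOf_eq_zero_inter_avoidsZeroUpTo {n : ℕ} (hn : n ≠ 0) :
    {ω | Y n ω = 0} ∩ avoidsZeroUpTo Y n = ∅ :=
  Set.eq_empty_of_forall_notMem fun _ ⟨h0, h⟩ => h (Fin.last n) hn h0

theorem iInf_hitting_le_tsum_indicator (ω : Ω) :
    ⨅ n ∈ {n : ℕ | 1 ≤ n ∧ Y n ω = 0}, (n : ℝ≥0∞)
      ≤ ∑' k, (avoidsZeroUpTo Y k).indicator 1 ω := by
  by_cases hit : ∃ n, 1 ≤ n ∧ Y n ω = 0
  · have before_hit : ∀ k < Nat.find hit, ω ∈ avoidsZeroUpTo Y k :=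
      fun k hk => mem_avoidsZeroUpTo_iff.2 fun m hm1 hmk h0 =>
        Nat.find_min hit (lt_of_le_of_lt hmk hk) ⟨hm1, h0⟩
    calc ⨅ n ∈ {n : ℕ | 1 ≤ n ∧ Y n ω = 0}, (n : ℝ≥0∞) ≤ Nat.find hit :=
          biInf_le _ (Nat.find_spec hit)
      _ = ∑ k ∈ Finset.range (Nat.find hit), (avoidsZeroUpTo Y k).indicator 1 ω := by
          rw [Finset.sum_congr rfl fun k hk =>
            Set.indicator_of_mem (before_hit k (Finset.mem_range.1 hk)) _]
          simp
      _ ≤ _ := ENNReal.sum_le_tsum _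
  · push Not at hit
    have always : ∀ k, ω ∈ avoidsZeroUpTo Y k :=
      fun k => mem_avoidsZeroUpTo_iff.2 fun m hm1 _ => hit m hm1
    simp [Set.indicator_of_mem (always _)]

variable [MeasurableSpace Ω] {P : Measure Ω}

theorem measure_eq_tsum_setOf_eq_inter {f : Ω → ℕ} (hf : Measurable f) {A : Set Ω}
    (hA : MeasurableSet A) : P A = ∑' i, P ({ω | f ω = i} ∩ A) := by
  have partition : A = ⋃ i, {ω | f ω = i} ∩ A := by
    ext ω
    simp
  conv_lhs => rw [partition]
  exact measure_iUnion
    ((pairwise_disjoint_fiber f).mono fun _ _ h => h.mono Set.inter_subset_left Set.inter_subset_left)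
    fun i => (hf (measurableSet_singleton i)).inter hA

theorem measurableSet_avoidsZeroUpTo (hY : ∀ n, Measurable (Y n)) (n : ℕ) :
    MeasurableSet (avoidsZeroUpTo Y n) := by
  simp only [avoidsZeroUpTo, Set.ofPred_forall]
  exact .iInter fun m => .iInter fun _ => ((hY m) (measurableSet_singleton 0)).compl

theorem tsum_measure_setOf_eq_zero_inter_avoidsZeroUpTo :
    ∑' n, P ({ω | Y n ω = 0} ∩ avoidsZeroUpTo Y n) = P {ω | Y 0 ω = 0} := by
  rw [tsum_eq_single 0 fun n hn => by rw [setOf_eq_zero_inter_avoidsZeroUpTo hn, measure_empty],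
    avoidsZeroUpTo_zero, Set.inter_univ]

theorem lintegral_hitting_le (hY : ∀ n, Measurable (Y n)) :
    ∫⁻ ω, (⨅ n ∈ {n : ℕ | 1 ≤ n ∧ Y n ω = 0}, (n : ℝ≥0∞)) ∂P
      ≤ P {ω | Y 0 ω = 0} + ∑' n, ∑' i, P ({ω | Y n ω = i + 1} ∩ avoidsZeroUpTo Y n) := by
  calc ∫⁻ ω, (⨅ n ∈ {n : ℕ | 1 ≤ n ∧ Y n ω = 0}, (n : ℝ≥0∞)) ∂P
      ≤ ∫⁻ ω, ∑' k, (avoidsZeroUpTo Y k).indicator 1 ω ∂P :=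
        lintegral_mono iInf_hitting_le_tsum_indicator
    _ = ∑' n, P (avoidsZeroUpTo Y n) := by
        rw [lintegral_tsum (f := fun k => (avoidsZeroUpTo Y k).indicator 1) fun k =>
          (measurable_one.indicator (measurableSet_avoidsZeroUpTo hY k)).aemeasurable]
        exact tsum_congr fun k => lintegral_indicator_one (measurableSet_avoidsZeroUpTo hY k)
    _ = ∑' n, (P ({ω | Y n ω = 0} ∩ avoidsZeroUpTo Y n)
          + ∑' i, P ({ω | Y n ω = i + 1} ∩ avoidsZeroUpTo Y n)) := by
        refine tsum_congr fun n => ?_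
        rw [measure_eq_tsum_setOf_eq_inter (hY n) (measurableSet_avoidsZeroUpTo hY n),
          tsum_eq_zero_add' ENNReal.summable]
    _ = _ := by rw [ENNReal.tsum_add, tsum_measure_setOf_eq_zero_inter_avoidsZeroUpTo]

/-- `E[V(Yₙ); T > n]`. -/
noncomputable def lyapunovMass (P : Measure Ω) (Y : ℕ → Ω → ℕ) (V : ℕ → ℝ≥0∞) (n : ℕ) : ℝ≥0∞ :=
  ∑' i, V i * P ({ω | Y n ω = i} ∩ avoidsZeroUpTo Y n)

theorem lyapunovMass_zero_of_forall_eq [IsProbabilityMeasure P] {x : ℕ}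
    (hstart : ∀ ω, Y 0 ω = x) (V : ℕ → ℝ≥0∞) : lyapunovMass P Y V 0 = V x := by
  rw [lyapunovMass, tsum_eq_single x fun i hi => by simp [hstart, Ne.symm hi]]
  simp [hstart, avoidsZeroUpTo_zero]

/-- `B` ranges over events determined by the history `Y 0, …, Y n`. -/
def IsMarkovChain (P : Measure Ω) (Y : ℕ → Ω → ℕ) (p : ℕ → ℕ → ℝ≥0∞) : Prop :=
  ∀ (n i j : ℕ) (B : (Fin (n + 1) → ℕ) → Prop),
    P ({ω | Y (n + 1) ω = j} ∩ {ω | Y n ω = i} ∩ {ω | B (fun k => Y k ω)})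
      = p i j * P ({ω | Y n ω = i} ∩ {ω | B (fun k => Y k ω)})

namespace IsMarkovChain

variable {p : ℕ → ℕ → ℝ≥0∞} {V : ℕ → ℝ≥0∞} {c d : ℝ≥0∞}

theorem tsum_mul_measure_succ (hY : ∀ n, Measurable (Y n)) (hp : IsMarkovChain P Y p) (n : ℕ) :
    ∑' j, V j * P ({ω | Y (n + 1) ω = j} ∩ avoidsZeroUpTo Y n)
      = ∑' i, (∑' j, V j * p i j) * P ({ω | Y n ω = i} ∩ avoidsZeroUpTo Y n) := by
  have step : ∀ i j, P ({ω | Y n ω = i} ∩ ({ω | Y (n + 1) ω = j} ∩ avoidsZeroUpTo Y n))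
      = p i j * P ({ω | Y n ω = i} ∩ avoidsZeroUpTo Y n) := fun i j => by
    rw [← Set.inter_assoc, Set.inter_comm {ω | Y n ω = i}]
    exact hp n i j fun f => ∀ m : Fin (n + 1), (m : ℕ) ≠ 0 → f m ≠ 0
  calc ∑' j, V j * P ({ω | Y (n + 1) ω = j} ∩ avoidsZeroUpTo Y n)
      = ∑' j, ∑' i, V j * (p i j * P ({ω | Y n ω = i} ∩ avoidsZeroUpTo Y n)) := by
        refine tsum_congr fun j => ?_
        rw [measure_eq_tsum_setOf_eq_inter (A := {ω | Y (n + 1) ω = j} ∩ avoidsZeroUpTo Y n) (hY n)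
          (((hY (n + 1)) (measurableSet_singleton j)).inter
          (measurableSet_avoidsZeroUpTo hY n)), ← ENNReal.tsum_mul_left]
        simp_rw [step]
    _ = _ := by
        rw [ENNReal.tsum_comm]
        refine tsum_congr fun i => ?_
        rw [← ENNReal.tsum_mul_right]
        simp_rw [mul_assoc]

theorem lyapunovMass_succ_add_le (hY : ∀ n, Measurable (Y n)) (hp : IsMarkovChain P Y p)
    (hV0 : ∑' j, V j * p 0 j ≤ V 0 + d) (hV : ∀ i, ∑' j, V j * p (i + 1) j + c ≤ V (i + 1))
    (n : ℕ) :
    lyapunovMass P Y V (n + 1) + c * ∑' i, P ({ω | Y n ω = i + 1} ∩ avoidsZeroUpTo Y n)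
      ≤ lyapunovMass P Y V n + d * P ({ω | Y n ω = 0} ∩ avoidsZeroUpTo Y n) := by
  set a : ℕ → ℝ≥0∞ := fun i => P ({ω | Y n ω = i} ∩ avoidsZeroUpTo Y n)
  set PV : ℕ → ℝ≥0∞ := fun i => ∑' j, V j * p i j
  have survival_shrinks : lyapunovMass P Y V (n + 1) ≤ ∑' i, PV i * a i := by
    rw [lyapunovMass, ← hp.tsum_mul_measure_succ hY]
    gcongr
    exact avoidsZeroUpTo_succ_subset n
  calc lyapunovMass P Y V (n + 1) + c * ∑' i, a (i + 1)
      ≤ ∑' i, PV i * a i + c * ∑' i, a (i + 1) := by gcongr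
    _ = PV 0 * a 0 + ∑' i, (PV (i + 1) + c) * a (i + 1) := by
        simp_rw [tsum_eq_zero_add' ENNReal.summable (f := fun i => PV i * a i), add_mul,
          ENNReal.tsum_add, ENNReal.tsum_mul_left, add_assoc]
    _ ≤ (V 0 + d) * a 0 + ∑' i, V (i + 1) * a (i + 1) := by
        gcongr with i
        exact hV i
    _ = lyapunovMass P Y V n + d * a 0 := by
        change _ = ∑' i, V i * a i + d * a 0
        rw [tsum_eq_zero_add' (f := fun i => V i * a i) ENNReal.summable]
        ring

theorem mul_tsum_measure_le (hY : ∀ n, Measurable (Y n)) (hp : IsMarkovChain P Y p)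
    (hV0 : ∑' j, V j * p 0 j ≤ V 0 + d) (hV : ∀ i, ∑' j, V j * p (i + 1) j + c ≤ V (i + 1)) :
    c * ∑' n, ∑' i, P ({ω | Y n ω = i + 1} ∩ avoidsZeroUpTo Y n)
      ≤ lyapunovMass P Y V 0 + d * P {ω | Y 0 ω = 0} := by
  rw [← ENNReal.tsum_mul_left, ← tsum_measure_setOf_eq_zero_inter_avoidsZeroUpTo,
    ← ENNReal.tsum_mul_left]
  exact ENNReal.tsum_le_add_tsum_of_succ_add_le (hp.lyapunovMass_succ_add_le hY hV0 hV)

end IsMarkovChain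

end HittingTime

section Kernel

variable {δ : ℝ}

theorem pKer_nonneg (h0 : 0 ≤ δ) (h1 : δ ≤ 1 / 2) (i j : ℕ) : 0 ≤ pKer δ i j := by
  unfold pKer
  split_ifs <;> first | linarith | positivity

theorem hasSum_natCast_mul_half_pow : HasSum (fun j : ℕ => (j : ℝ) * (1 / 2) ^ j) 2 := by
  have h := hasSum_coe_mul_geometric_of_norm_lt_one (𝕜 := ℝ) (r := 1 / 2) (by norm_num)
  norm_num at h
  exact h

theorem hasSum_natCast_mul_pKer_zero (δ : ℝ) :
    HasSum (fun j : ℕ => (j : ℝ) * pKer δ 0 j) (2 * δ) := by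
  have jumps : (fun j : ℕ => (j : ℝ) * pKer δ 0 j) = fun j : ℕ => δ * ((j : ℝ) * (1 / 2) ^ j) := by
    funext j
    rcases eq_or_ne j 0 with rfl | hj
    · simp
    · rw [pKer, if_pos rfl, if_neg hj]
      ring
  rw [jumps, mul_comm]
  exact hasSum_natCast_mul_half_pow.mul_left δ

theorem hasSum_natCast_mul_pKer_of_ne_zero (δ : ℝ) {i : ℕ} (hi : i ≠ 0) :
    HasSum (fun j : ℕ => (j : ℝ) * pKer δ i j) (i - 1 + 4 * δ) := by
  have down_step : ∑ j ∈ Finset.range i, (j : ℝ) * pKer δ i j = (i - 1) * (1 - 2 * δ) := by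
    rw [Finset.sum_eq_single_of_mem (i - 1) (Finset.mem_range.2 (by omega))]
    · rw [pKer, if_neg hi, if_pos (by omega), Nat.cast_pred (Nat.pos_of_ne_zero hi)]
    · intro j hj hji
      have hj := Finset.mem_range.1 hj
      rw [pKer, if_neg hi, if_neg (by omega), if_neg (by omega), mul_zero]
  have jumps : (fun k : ℕ => ((k + i : ℕ) : ℝ) * pKer δ i (k + i))
      = fun k : ℕ => δ * ((k : ℝ) * (1 / 2) ^ k) + i * δ * (1 / 2) ^ k := by
    funext k
    rw [pKer, if_neg hi, if_neg (by omega), if_pos (by omega), Nat.add_sub_cancel]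
    push_cast
    ring
  have up_jumps : HasSum (fun k : ℕ => ((k + i : ℕ) : ℝ) * pKer δ i (k + i))
      (δ * 2 + i * δ * 2) := by
    rw [jumps]
    exact (hasSum_natCast_mul_half_pow.mul_left δ).add (hasSum_geometric_two.mul_left (i * δ))
  rw [← hasSum_nat_add_iff' i, down_step, show (i : ℝ) - 1 + 4 * δ - (i - 1) * (1 - 2 * δ)
    = δ * 2 + i * δ * 2 by ring]
  exact up_jumps

theorem tsum_natCast_mul_ofReal_eq {q : ℕ → ℝ} {s : ℝ} (hq : ∀ j, 0 ≤ q j)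
    (h : HasSum (fun j : ℕ => (j : ℝ) * q j) s) :
    ∑' j : ℕ, (j : ℝ≥0∞) * ENNReal.ofReal (q j) = ENNReal.ofReal s := by
  rw [← h.tsum_eq,
    ENNReal.ofReal_tsum_of_nonneg (fun j => mul_nonneg j.cast_nonneg (hq j)) h.summable]
  simp_rw [ENNReal.ofReal_mul (Nat.cast_nonneg _), ENNReal.ofReal_natCast]

theorem tsum_natCast_mul_ofReal_pKer_zero (h0 : 0 ≤ δ) (h1 : δ ≤ 1 / 2) :
    ∑' j : ℕ, (j : ℝ≥0∞) * ENNReal.ofReal (pKer δ 0 j) = ENNReal.ofReal (2 * δ) :=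
  tsum_natCast_mul_ofReal_eq (pKer_nonneg h0 h1 0) (hasSum_natCast_mul_pKer_zero δ)

theorem tsum_natCast_mul_ofReal_pKer_succ_add (h0 : 0 ≤ δ) (h1 : δ ≤ 1 / 4) (i : ℕ) :
    ∑' j : ℕ, (j : ℝ≥0∞) * ENNReal.ofReal (pKer δ (i + 1) j) + ENNReal.ofReal (1 - 4 * δ)
      = ((i + 1 : ℕ) : ℝ≥0∞) := by
  rw [tsum_natCast_mul_ofReal_eq (pKer_nonneg h0 (by linarith) _)
      (hasSum_natCast_mul_pKer_of_ne_zero δ i.succ_ne_zero),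
    ← ENNReal.ofReal_add (by push_cast; linarith [(i.cast_nonneg : (0 : ℝ) ≤ i)]) (by linarith), ← ENNReal.ofReal_natCast]
  congr 1
  push_cast
  ring

end Kernel

/-- For the Markov chain `(Y_n)` on `ℕ₀` with transition probabilities `pKer δ`, `δ ∈ (0,1/16)`,
the expected first hitting time `m_j` of `0` started from `j` satisfies
`m_j ≤ 1 + 5 (3/2)^j` for `j ≥ 1`, and `m_0 ≤ 1 + 15 δ`. -/
theorem stmt_6 {Ω : Type*} [MeasurableSpace Ω] (P : Measure Ω) [IsProbabilityMeasure P]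
    (δ : ℝ) (hδ : δ ∈ Set.Ioo (0 : ℝ) (1 / 16))
    (Y : ℕ → Ω → ℕ) (hYmeas : ∀ n, Measurable (Y n))
    (hMarkov : ∀ (n i j : ℕ) (B : (Fin (n + 1) → ℕ) → Prop),
      P ({ω | Y (n + 1) ω = j} ∩ {ω | Y n ω = i} ∩ {ω | B (fun k => Y k ω)})
        = ENNReal.ofReal (pKer δ i j) * P ({ω | Y n ω = i} ∩ {ω | B (fun k => Y k ω)}))
    (x : ℕ) (hstart : ∀ ω, Y 0 ω = x) :
    (1 ≤ x →
      ∫⁻ ω, (⨅ n ∈ {n : ℕ | 1 ≤ n ∧ Y n ω = 0}, (n : ℝ≥0∞)) ∂P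
        ≤ ENNReal.ofReal (1 + 5 * (3 / 2 : ℝ) ^ x)) ∧
    (x = 0 →
      ∫⁻ ω, (⨅ n ∈ {n : ℕ | 1 ≤ n ∧ Y n ω = 0}, (n : ℝ≥0∞)) ∂P
        ≤ ENNReal.ofReal (1 + 15 * δ)) := by
  obtain ⟨hδ0, hδ1⟩ := hδ
  have hdrift := IsMarkovChain.mul_tsum_measure_le hYmeas hMarkov (V := fun j => (j : ℝ≥0∞))
    ((tsum_natCast_mul_ofReal_pKer_zero hδ0.le (by linarith)).trans_le le_add_self)
    fun i => (tsum_natCast_mul_ofReal_pKer_succ_add hδ0.le (by linarith) i).le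
  rw [lyapunovMass_zero_of_forall_eq hstart] at hdrift
  have hT := lintegral_hitting_le (P := P) hYmeas
  have hc : 0 < 1 - 4 * δ := by linarith
  constructor
  · intro hx
    have hstart0 : {ω | Y 0 ω = 0} = ∅ :=
      Set.eq_empty_of_forall_notMem fun ω h => by have := (hstart ω).symm.trans h; omega
    rw [hstart0, measure_empty, mul_zero, add_zero, ← ENNReal.ofReal_natCast] at hdrift
    rw [hstart0, measure_empty, zero_add] at hT
    refine hT.trans (ENNReal.le_ofReal_of_ofReal_mul_le hc ?_ hdrift)
    have hpow : 1 + (x : ℝ) * (1 / 2) ≤ (3 / 2 : ℝ) ^ x := by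
      rw [show (3 / 2 : ℝ) = 1 + 1 / 2 by norm_num]
      exact one_add_mul_le_pow (by norm_num) x
    nlinarith
  · rintro rfl
    have hstart0 : {ω | Y 0 ω = 0} = Set.univ := Set.eq_univ_of_forall hstart
    rw [hstart0, measure_univ, mul_one, Nat.cast_zero, zero_add] at hdrift
    rw [hstart0, measure_univ] at hT
    refine hT.trans ?_
    rw [ENNReal.ofReal_add zero_le_one (by linarith), ENNReal.ofReal_one]
    gcongr
    exact ENNReal.le_ofReal_of_ofReal_mul_le hc (by nlinarith) hdrift
end

section
/- Let (ξ_s)_{s∈[0,t]} be a continuous path in ℝ^d with ξ_0 = y and ξ_t = 0, let e ∈ ℝ^d be a unit vector, and let R : (0,t) → [0,∞) be any function. Then there are at most two values of r ∈ ℝ such that R_s ≥ ‖ξ_s + (s/t) r e‖ for all s ∈ (0,t) and R_s = ‖ξ_s + (s/t) r e‖ for some s ∈ (0,t). -/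
/-!
For fixed `s`, `r ↦ ‖ξ s + (s / t) r e‖²` is a quadratic in `r` with leading coefficient
`(s / t)² > 0`, so the set of `r` with `‖ξ s + (s / t) r e‖ ≤ R s` is an interval on whose interior
the inequality is strict. Hence an admissible `r` lying strictly between two other admissible
values cannot attain equality at any `s`, and the admissible values with equality number at most
two.
-/

open Set

theorem exists_subset_pair_of_forall_notMem_Ioo {α : Type*} [LinearOrder α] [Nonempty α]
    {S : Set α} (h : ∀ p ∈ S, ∀ q ∈ S, ∀ m ∈ S, m ∉ Ioo p q) : ∃ a b : α, S ⊆ {a, b} := by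
  by_contra! hS
  obtain ⟨p, hp, -⟩ := not_subset.1 (hS (Classical.arbitrary α) (Classical.arbitrary α))
  obtain ⟨q, hq, hqp⟩ := not_subset.1 (hS p p)
  obtain ⟨m, hm, hmpq⟩ := not_subset.1 (hS p q)
  simp only [mem_insert_iff, mem_singleton_iff, or_self, not_or] at hqp hmpq
  obtain ⟨hmp, hmq⟩ := hmpq
  wlog hpq : p < q generalizing p q
  · exact this q hq p hp (Ne.symm hqp) hmq hmp (lt_of_le_of_ne (not_lt.1 hpq) hqp)
  rcases lt_or_gt_of_ne hmp with hmp | hpm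
  · exact h m hm q hq p hp ⟨hmp, hpq⟩
  rcases lt_or_gt_of_ne hmq with hmq | hqm
  · exact h p hp q hq m hm ⟨hpm, hmq⟩
  · exact h p hp m hm q hq ⟨hpq, hqm⟩

theorem norm_add_smul_lt_of_mem_Ioo {E : Type*} [NormedAddCommGroup E] [InnerProductSpace ℝ E]
    {v w : E} (hw : w ≠ 0) {p q m ρ : ℝ} (hp : ‖v + p • w‖ ≤ ρ) (hq : ‖v + q • w‖ ≤ ρ)
    (hm : m ∈ Ioo p q) : ‖v + m • w‖ < ρ := by
  have expand (r : ℝ) : ‖v + r • w‖ ^ 2 = ‖v‖ ^ 2 + 2 * r * inner ℝ v w + r ^ 2 * ‖w‖ ^ 2 := by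
    rw [norm_add_sq_real, real_inner_smul_right, norm_smul, Real.norm_eq_abs, mul_pow, sq_abs]
    ring
  have hρ : 0 ≤ ρ := (norm_nonneg _).trans hp
  have hp2 := pow_le_pow_left₀ (norm_nonneg _) hp 2
  have hq2 := pow_le_pow_left₀ (norm_nonneg _) hq 2
  obtain ⟨hpm, hmq⟩ := hm
  -- the defect of the quadratic from its chord through `p` and `q`
  have chord : (q - p) * ‖v + m • w‖ ^ 2 = (q - m) * ‖v + p • w‖ ^ 2 + (m - p) * ‖v + q • w‖ ^ 2
      - (q - m) * (m - p) * (q - p) * ‖w‖ ^ 2 := by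
    rw [expand, expand, expand]; ring
  have hw2 : 0 < ‖w‖ ^ 2 := by positivity
  have hm2 : ‖v + m • w‖ ^ 2 < ρ ^ 2 := by
    nlinarith [mul_pos (mul_pos (sub_pos.2 hmq) (sub_pos.2 hpm)) (sub_pos.2 (hpm.trans hmq))]
  exact lt_of_pow_lt_pow_left₀ 2 hρ hm2

theorem stmt_7_general {d : ℕ} (t : ℝ) (ht : 0 < t)
    (ξ : ℝ → EuclideanSpace ℝ (Fin d))
    (e : EuclideanSpace ℝ (Fin d)) (he : ‖e‖ = 1)
    (R : ℝ → ℝ) :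
    ∃ a b : ℝ,
      {r : ℝ | (∀ s ∈ Set.Ioo 0 t, ‖ξ s + (s / t) • (r • e)‖ ≤ R s) ∧
        ∃ s ∈ Set.Ioo 0 t, ‖ξ s + (s / t) • (r • e)‖ = R s} ⊆ {a, b} := by
  refine exists_subset_pair_of_forall_notMem_Ioo ?_
  rintro p ⟨hp, -⟩ q ⟨hq, -⟩ m ⟨-, s, hs, hm⟩ hpqm
  have he0 : e ≠ 0 := by rintro rfl; simp at he
  have hw : (s / t) • e ≠ 0 := smul_ne_zero (div_pos hs.1 ht).ne' he0
  have hp := hp s hs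
  have hq := hq s hs
  rw [smul_comm] at hp hq hm
  exact (norm_add_smul_lt_of_mem_Ioo hw hp hq hpqm).ne hm

/-- Let `ξ` be a continuous path in `ℝ^d` on `[0,t]` with `ξ 0 = y` and `ξ t = 0`, `e` a unit
vector, and `R : (0,t) → [0,∞)` any function. Then there are at most two values of `r ∈ ℝ`
such that `‖ξ s + (s/t) r e‖ ≤ R s` for all `s ∈ (0,t)` with equality for some `s ∈ (0,t)`. -/
theorem stmt_7 {d : ℕ} (t : ℝ) (ht : 0 < t) (y : EuclideanSpace ℝ (Fin d))
    (ξ : ℝ → EuclideanSpace ℝ (Fin d))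
    (hcont : ContinuousOn ξ (Set.Icc 0 t))
    (h0 : ξ 0 = y) (hT : ξ t = 0)
    (e : EuclideanSpace ℝ (Fin d)) (he : ‖e‖ = 1)
    (R : ℝ → ℝ) (hR : ∀ s ∈ Set.Ioo 0 t, 0 ≤ R s) :
    ∃ a b : ℝ,
      {r : ℝ | (∀ s ∈ Set.Ioo 0 t, ‖ξ s + (s / t) • (r • e)‖ ≤ R s) ∧
        ∃ s ∈ Set.Ioo 0 t, ‖ξ s + (s / t) • (r • e)‖ = R s} ⊆ {a, b} :=
  stmt_7_general t ht ξ e he R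
end

section
/- Let F, G : [0,∞) → ℝ be non-decreasing functions with F continuous, F(0) = 0 and lim_{r→∞} F(r) ≥ 1 - M^{-1}, where M ∈ ℕ, M ≥ 3, and G arbitrary with values in [0,1]. Define r_k = inf{y ≥ 0 : F(y) ≥ k/M} for 0 ≤ k ≤ M. Suppose |G(r_k) - F(r_k)| ≤ η for all 1 ≤ k ≤ M - 2 (with η ≥ 0) and that (M-2)/M + η ≤ 1. Then sup_{r≥0} |min(G(r),1) - min(F(r),1)| ≤ η + 1/M + 2/M. -/
/-!
Continuity of `F` and `F 0 = 0` give `F (r_k) = k/M`, and `r_k ≤ r ↔ k/M ≤ F r`, so the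
quantile points cut `[0, ∞)` into intervals on which `F` increases by `1/M`.  On such an
interval `G` is squeezed between its values at the two endpoints, which are `η`-close to those
of `F`; beyond `r_{M-2}` both `G` and `min F 1` lie in `[1 - 2/M - η, 1]`.
-/

open Set Filter Topology

/-- The point `r_k` of the paper is `quantileLevel F (k / M)`. -/
noncomputable def quantileLevel (F : ℝ → ℝ) (t : ℝ) : ℝ :=
  sInf {y : ℝ | 0 ≤ y ∧ t ≤ F y}

section Quantile

variable {F : ℝ → ℝ} {t r : ℝ}

theorem quantileLevel_mem (hF : ContinuousOn F (Ici 0)) (hne : ∃ y, 0 ≤ y ∧ t ≤ F y) :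
    0 ≤ quantileLevel F t ∧ t ≤ F (quantileLevel F t) := by
  have hclosed : IsClosed {y : ℝ | 0 ≤ y ∧ t ≤ F y} :=
    hF.preimage_isClosed_of_isClosed isClosed_Ici isClosed_Ici
  exact hclosed.csInf_mem hne ⟨0, fun _ hy => hy.1⟩

theorem quantileLevel_le (hr : 0 ≤ r) (htr : t ≤ F r) : quantileLevel F t ≤ r :=
  csInf_le ⟨0, fun _ hy => hy.1⟩ ⟨hr, htr⟩

theorem apply_quantileLevel (hF : ContinuousOn F (Ici 0)) (hF0 : F 0 = 0) (ht : 0 ≤ t)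
    (hne : ∃ y, 0 ≤ y ∧ t ≤ F y) : F (quantileLevel F t) = t := by
  obtain ⟨hq, htq⟩ := quantileLevel_mem hF hne
  have hmem : t ∈ Icc (F 0) (F (quantileLevel F t)) := ⟨by rwa [hF0], htq⟩
  obtain ⟨c, ⟨hc0, hcq⟩, hFc⟩ := intermediate_value_Icc hq (hF.mono Icc_subset_Ici_self) hmem
  rwa [le_antisymm hcq (quantileLevel_le hc0 hFc.ge)] at hFc

theorem quantileLevel_le_iff (hmono : MonotoneOn F (Ici 0)) (hF : ContinuousOn F (Ici 0))
    (hne : ∃ y, 0 ≤ y ∧ t ≤ F y) (hr : 0 ≤ r) : quantileLevel F t ≤ r ↔ t ≤ F r := by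
  obtain ⟨hq, htq⟩ := quantileLevel_mem hF hne
  exact ⟨fun h => htq.trans (hmono hq hr h), quantileLevel_le hr⟩

variable {G : ℝ → ℝ} {η : ℝ}

theorem sub_le_apply_of_le_apply (hmono : MonotoneOn F (Ici 0)) (hF : ContinuousOn F (Ici 0))
    (hG : MonotoneOn G (Ici 0)) (hne : ∃ y, 0 ≤ y ∧ t ≤ F y) (hr : 0 ≤ r)
    (hclose : |G (quantileLevel F t) - F (quantileLevel F t)| ≤ η) (htr : t ≤ F r) :
    t - η ≤ G r := by
  obtain ⟨hq, htq⟩ := quantileLevel_mem hF hne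
  have hqr := (quantileLevel_le_iff hmono hF hne hr).2 htr
  linarith [(abs_le.1 hclose).1, hG hq hr hqr]

theorem apply_le_add_of_apply_lt (hmono : MonotoneOn F (Ici 0)) (hF : ContinuousOn F (Ici 0))
    (hF0 : F 0 = 0) (hG : MonotoneOn G (Ici 0)) (ht : 0 ≤ t) (hne : ∃ y, 0 ≤ y ∧ t ≤ F y)
    (hr : 0 ≤ r) (hclose : |G (quantileLevel F t) - F (quantileLevel F t)| ≤ η)
    (hrt : F r < t) : G r ≤ t + η := by
  have hrq : r ≤ quantileLevel F t :=
    le_of_not_ge fun h => hrt.not_ge ((quantileLevel_le_iff hmono hF hne hr).1 h)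
  have hGq := hG hr (quantileLevel_mem hF hne).1 hrq
  linarith [(abs_le.1 hclose).2, apply_quantileLevel hF hF0 ht hne]

end Quantile

theorem abs_sub_min_one_le_of_levels {M : ℕ} (hM : 3 ≤ M) {η x g : ℝ} (hη : 0 ≤ η)
    (hx : 0 ≤ x) (hg : g ∈ Icc 0 1)
    (hlow : ∀ k : ℕ, 1 ≤ k → k + 2 ≤ M → (k : ℝ) / M ≤ x → (k : ℝ) / M - η ≤ g)
    (hup : ∀ k : ℕ, 1 ≤ k → k + 2 ≤ M → x < (k : ℝ) / M → g ≤ (k : ℝ) / M + η) :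
    |g - min x 1| ≤ η + 2 / M := by
  have hMpos : (0 : ℝ) < M := by positivity
  set n := ⌊x * M⌋₊
  have hn : (n : ℝ) / M ≤ x := by
    rw [div_le_iff₀ hMpos]; exact Nat.floor_le (by positivity)
  have hn1 : x < ((n + 1 : ℕ) : ℝ) / M := by
    rw [lt_div_iff₀ hMpos]; push_cast; exact Nat.lt_floor_add_one _
  rcases le_or_gt (n + 3) M with hsmall | hbig
  · have hgup := hup (n + 1) (by omega) (by omega) hn1
    have hgdown : (n : ℝ) / M - η ≤ g := by
      rcases Nat.eq_zero_or_pos n with hn0 | hnpos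
      · simp only [hn0, Nat.cast_zero, zero_div, zero_sub]; linarith [hg.1]
      · exact hlow n hnpos (by omega) hn
    have hx1 : x ≤ 1 := by
      refine hn1.le.trans ((div_le_one hMpos).2 ?_); exact_mod_cast (by omega : n + 1 ≤ M)
    have hstep : ((n + 1 : ℕ) : ℝ) / M = n / M + 1 / M := by push_cast; ring
    have h12 : 1 / (M : ℝ) ≤ 2 / M := by gcongr; norm_num
    rw [min_eq_left hx1, abs_le]
    constructor <;> linarith [div_pos one_pos hMpos]
  · have hlast : ((M - 2 : ℕ) : ℝ) / M = 1 - 2 / M := by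
      rw [Nat.cast_sub (by omega)]; field_simp; push_cast; ring
    have hx' : 1 - 2 / M ≤ x := by
      rw [← hlast]; refine le_trans ?_ hn; gcongr; exact_mod_cast (by omega : M - 2 ≤ n)
    have hgdown := hlow (M - 2) (by omega) (by omega) (hlast ▸ hx')
    rw [hlast] at hgdown
    have hmin : 1 - 2 / M ≤ min x 1 := le_min hx' (by linarith [div_pos two_pos hMpos])
    rw [abs_le]
    constructor <;> linarith [min_le_right x 1, hg.2]

theorem exists_nonneg_le_of_tendsto_atTop {F : ℝ → ℝ} {L t : ℝ} (hL : Tendsto F atTop (𝓝 L))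
    (ht : t < L) :
    ∃ y, 0 ≤ y ∧ t ≤ F y := by
  obtain ⟨y, hy, hy0⟩ :=
    ((hL.eventually (eventually_ge_nhds ht)).and (eventually_ge_atTop 0)).exists
  exact ⟨y, hy0, hy⟩

theorem stmt_11_general (M : ℕ) (hM : 3 ≤ M) (η : ℝ) (hη : 0 ≤ η)
    (F G : ℝ → ℝ)
    (hFmono : MonotoneOn F (Set.Ici 0)) (hGmono : MonotoneOn G (Set.Ici 0))
    (hFcont : ContinuousOn F (Set.Ici 0)) (hF0 : F 0 = 0)
    (hFlim : ∃ L : ℝ, Filter.Tendsto F Filter.atTop (nhds L) ∧ 1 - (M : ℝ)⁻¹ ≤ L)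
    (hG01 : ∀ r, 0 ≤ r → G r ∈ Set.Icc (0 : ℝ) 1)
    (hclose : ∀ k : ℕ, 1 ≤ k → k ≤ M - 2 →
      |G (sInf {y : ℝ | 0 ≤ y ∧ (k : ℝ) / M ≤ F y})
        - F (sInf {y : ℝ | 0 ≤ y ∧ (k : ℝ) / M ≤ F y})| ≤ η) :
    ∀ r, 0 ≤ r → |min (G r) 1 - min (F r) 1| ≤ η + 1 / M + 2 / M := by
  obtain ⟨L, hL, hL1⟩ := hFlim
  have hMpos : (0 : ℝ) < M := by positivity
  have hreach (k : ℕ) (hk : k + 2 ≤ M) : ∃ y, 0 ≤ y ∧ (k : ℝ) / M ≤ F y := by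
    refine exists_nonneg_le_of_tendsto_atTop hL ?_
    have : (k : ℝ) / M + 2 / M ≤ 1 := by
      rw [← add_div, div_le_one hMpos]; exact_mod_cast hk
    rw [div_eq_mul_inv 2] at this
    linarith [inv_pos.2 hMpos]
  intro r hr
  have hGr := hG01 r hr
  have hlow (k : ℕ) (hk1 : 1 ≤ k) (hk : k + 2 ≤ M) :=
    sub_le_apply_of_le_apply hFmono hFcont hGmono (hreach k hk) hr (hclose k hk1 (by omega))
  have hup (k : ℕ) (hk1 : 1 ≤ k) (hk : k + 2 ≤ M) :=
    apply_le_add_of_apply_lt hFmono hFcont hF0 hGmono (by positivity) (hreach k hk) hr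
      (hclose k hk1 (by omega))
  have key := abs_sub_min_one_le_of_levels hM hη (hF0 ▸ hFmono self_mem_Ici hr hr) hGr hlow hup
  rw [min_eq_left hGr.2]
  linarith [div_pos one_pos hMpos]

/-- Deterministic interpolation: if `F` is continuous non-decreasing on `[0,∞)` with `F 0 = 0`
and limit at infinity at least `1 - 1/M` (`M ≥ 3`), `G : [0,∞) → [0,1]` is non-decreasing, and
`|G(r_k) - F(r_k)| ≤ η` at the quantile points `r_k = inf {y ≥ 0 : F y ≥ k/M}` for
`1 ≤ k ≤ M - 2` (with `(M-2)/M + η ≤ 1`), then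
`sup_{r ≥ 0} |min(G r, 1) - min(F r, 1)| ≤ η + 1/M + 2/M`. -/
theorem stmt_11 (M : ℕ) (hM : 3 ≤ M) (η : ℝ) (hη : 0 ≤ η)
    (F G : ℝ → ℝ)
    (hFmono : MonotoneOn F (Set.Ici 0)) (hGmono : MonotoneOn G (Set.Ici 0))
    (hFcont : ContinuousOn F (Set.Ici 0)) (hF0 : F 0 = 0)
    (hFlim : ∃ L : ℝ, Filter.Tendsto F Filter.atTop (nhds L) ∧ 1 - (M : ℝ)⁻¹ ≤ L)
    (hG01 : ∀ r, 0 ≤ r → G r ∈ Set.Icc (0 : ℝ) 1)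
    (hclose : ∀ k : ℕ, 1 ≤ k → k ≤ M - 2 →
      |G (sInf {y : ℝ | 0 ≤ y ∧ (k : ℝ) / M ≤ F y})
        - F (sInf {y : ℝ | 0 ≤ y ∧ (k : ℝ) / M ≤ F y})| ≤ η)
    (hcond : ((M : ℝ) - 2) / M + η ≤ 1) :
    ∀ r, 0 ≤ r → |min (G r) 1 - min (F r) 1| ≤ η + 1 / M + 2 / M :=
  stmt_11_general M hM η hη F G hFmono hGmono hFcont hF0 hFlim hG01 hclose
end

section
/- Let μ be a probability measure on ℝ^d and Φ_ε the heat kernel at time ε ∈ (0,1). Then for every r ≥ 0, ∫_{B(r)} (Φ_ε * μ)(y) dy ≤ μ(B(r + ε^{1/3})) + 2d e^{-ε^{-1/3}/(4d)}, where B(r) is the open ball of radius r centred at the origin. -/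
/-!
Write `g x = ∫_{B(r)} Φ_ε(y - x) dy`, so that the left-hand side is `∫ g dμ` by Fubini.
Always `g ≤ ∫ Φ_ε = 1`, and if `‖x‖ ≥ r + δ` every `y ∈ B(r)` has `‖y - x‖ ≥ δ`, so
`g x ≤ ∫_{‖z‖ ≥ δ} Φ_ε`. Splitting `μ` along `B(r + δ)` gives `μ(B(r + δ))` plus this tail.
A vector of norm `≥ δ` has a coordinate of modulus `≥ δ/√d`, and the Chernoff bound bounds the
heat-kernel mass of each half-space `{⟪v, z⟫ ≥ a}` by `e^{-a²/(4ε)}`; with `δ = ε^{1/3}` the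
resulting `2d e^{-δ²/(4dε)}` is the claimed error term.
-/

open MeasureTheory Metric Module Real Set
open scoped RealInnerProductSpace

theorem setIntegral_iUnion_le {α ι : Type*} [MeasurableSpace α] [Fintype ι] {μ : Measure α}
    {f : α → ℝ} (hf0 : 0 ≤ f) (hf : Integrable f μ) (s : ι → Set α) :
    ∫ x in ⋃ i, s i, f x ∂μ ≤ ∑ i, ∫ x in s i, f x ∂μ := by
  calc ∫ x in ⋃ i, s i, f x ∂μ ≤ ∫ x, f x ∂(∑ i, μ.restrict (s i)) := by
        refine integral_mono_measure ?_ (ae_of_all _ hf0) ?_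
        · rw [← Measure.sum_fintype]
          exact Measure.restrict_iUnion_le
        · exact integrable_finsetSum_measure.2 fun i _ => hf.restrict
    _ = ∑ i, ∫ x in s i, f x ∂μ := integral_finsetSum_measure fun i _ => hf.restrict

section Convolution

variable {E : Type*} [NormedAddCommGroup E] [MeasurableSpace E] [MeasurableAdd E]
  {ν : Measure E} [ν.IsAddRightInvariant] {K : E → ℝ}

theorem integrable_restrict_prod_comp_sub [MeasurableSub₂ E] [SFinite ν] (hK : Integrable K ν)
    (hKm : Measurable K) (s : Set E) (μ : Measure E) [IsFiniteMeasure μ] :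
    Integrable (fun p : E × E => K (p.1 - p.2)) ((ν.restrict s).prod μ) := by
  have hmeas : Measurable fun p : E × E => K (p.1 - p.2) := hKm.comp measurable_sub
  refine (integrable_prod_iff' hmeas.aestronglyMeasurable).2
    ⟨ae_of_all _ fun x => (hK.comp_sub_right x).restrict, ?_⟩
  refine .of_bound hmeas.norm.stronglyMeasurable.integral_prod_left'.aestronglyMeasurable
    (∫ z, ‖K z‖ ∂ν) (ae_of_all _ fun x => ?_)
  rw [Real.norm_of_nonneg (integral_nonneg fun _ => norm_nonneg _),
    ← integral_sub_right_eq_self (fun z => ‖K z‖) x]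
  exact setIntegral_le_integral (hK.norm.comp_sub_right x) (ae_of_all _ fun _ => norm_nonneg _)

theorem setIntegral_comp_sub_le_integral (hK0 : 0 ≤ K) (hK : Integrable K ν) (s : Set E)
    (x : E) :
    ∫ y in s, K (y - x) ∂ν ≤ ∫ z, K z ∂ν := by
  rw [← integral_sub_right_eq_self K x]
  exact setIntegral_le_integral (hK.comp_sub_right x) (ae_of_all _ fun y => hK0 (y - x))

theorem setIntegral_ball_comp_sub_le_of_le_dist [OpensMeasurableSpace E] (hK0 : 0 ≤ K)
    (hK : Integrable K ν) {c x : E} {r δ : ℝ} (hx : r + δ ≤ dist x c) :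
    ∫ y in ball c r, K (y - x) ∂ν ≤ ∫ z in {z | δ ≤ ‖z‖}, K z ∂ν := by
  have hsub : ball c r ⊆ (· - x) ⁻¹' {z | δ ≤ ‖z‖} := fun y hy => by
    rw [mem_ball] at hy
    rw [mem_preimage, mem_ofPred_eq, ← dist_eq_norm, dist_comm]
    linarith [dist_triangle x y c]
  calc ∫ y in ball c r, K (y - x) ∂ν ≤ ∫ y in (· - x) ⁻¹' {z | δ ≤ ‖z‖}, K (y - x) ∂ν :=
        setIntegral_mono_set (hK.comp_sub_right x).integrableOn
          (ae_of_all _ fun y => hK0 (y - x)) (Filter.Eventually.of_forall hsub)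
    _ = ∫ z in {z | δ ≤ ‖z‖}, K z ∂ν :=
        (measurePreserving_sub_right ν x).setIntegral_preimage_emb
          (MeasurableEquiv.subRight x).measurableEmbedding K _

theorem setIntegral_ball_integral_comp_sub_le [MeasurableSub₂ E] [OpensMeasurableSpace E]
    [SFinite ν] (hK0 : 0 ≤ K) (hK : Integrable K ν) (hKm : Measurable K) (μ : Measure E)
    [IsProbabilityMeasure μ] (c : E) (r δ : ℝ) :
    ∫ y in ball c r, ∫ x, K (y - x) ∂μ ∂ν
      ≤ (μ (ball c (r + δ))).toReal * ∫ z, K z ∂ν + ∫ z in {z | δ ≤ ‖z‖}, K z ∂ν := by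
  have hint := integrable_restrict_prod_comp_sub hK hKm (ball c r) μ
  rw [integral_integral_swap hint]
  set M := ∫ z, K z ∂ν
  set T := ∫ z in {z | δ ≤ ‖z‖}, K z ∂ν
  have hT : 0 ≤ T := setIntegral_nonneg (measurableSet_le measurable_const measurable_norm)
    fun z _ => hK0 z
  have hbound : ∀ x,
      ∫ y in ball c r, K (y - x) ∂ν ≤ (ball c (r + δ)).indicator (fun _ => M) x + T := by
    intro x
    by_cases hx : x ∈ ball c (r + δ)
    · rw [indicator_of_mem hx]
      linarith [setIntegral_comp_sub_le_integral hK0 hK (ball c r) x]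
    · rw [indicator_of_notMem hx, zero_add]
      exact setIntegral_ball_comp_sub_le_of_le_dist hK0 hK (not_lt.1 hx)
  calc ∫ x, ∫ y in ball c r, K (y - x) ∂ν ∂μ
      ≤ ∫ x, ((ball c (r + δ)).indicator (fun _ => M) x + T) ∂μ :=
        integral_mono hint.integral_prod_right
          (((integrable_const M).indicator measurableSet_ball).add (integrable_const T)) hbound
    _ = (μ (ball c (r + δ))).toReal * M + T := by
        rw [integral_add ((integrable_const M).indicator measurableSet_ball) (integrable_const T),
          integral_indicator_const M measurableSet_ball]
        simp [measureReal_def]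

end Convolution

section HeatKernel

variable {V : Type*} [NormedAddCommGroup V] [InnerProductSpace ℝ V] {ε : ℝ}

noncomputable def heatKernel (ε : ℝ) (z : V) : ℝ :=
  (4 * π * ε) ^ (-(finrank ℝ V : ℝ) / 2) * exp (-‖z‖ ^ 2 / (4 * ε))

theorem heatKernel_nonneg (hε : 0 ≤ ε) (z : V) : 0 ≤ heatKernel ε z := by
  unfold heatKernel; positivity

theorem continuous_heatKernel (ε : ℝ) : Continuous (heatKernel (V := V) ε) := by
  unfold heatKernel; fun_prop

theorem heatKernel_mul_exp_inner (hε : ε ≠ 0) (t : ℝ) (v z : V) :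
    heatKernel ε z * exp (t * ⟪v, z⟫) =
      exp (ε * t ^ 2 * ‖v‖ ^ 2) * heatKernel ε (z - (2 * ε * t) • v) := by
  unfold heatKernel
  rw [mul_assoc, ← exp_add, mul_left_comm, ← exp_add, norm_sub_sq_real, inner_smul_right,
    norm_smul, mul_pow, Real.norm_eq_abs, sq_abs, real_inner_comm]
  congr 2
  field_simp
  ring

variable [FiniteDimensional ℝ V] [MeasurableSpace V] [BorelSpace V]

theorem integral_heatKernel (hε : 0 < ε) : ∫ z, heatKernel (V := V) ε z = 1 := by
  have hexp : ∀ z : V, exp (-‖z‖ ^ 2 / (4 * ε)) = exp (-(4 * ε)⁻¹ * ‖z‖ ^ 2) := fun z => by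
    congr 1; field_simp
  have hpos : 0 < 4 * π * ε := by positivity
  simp only [heatKernel, hexp]
  rw [integral_const_mul, GaussianFourier.integral_rexp_neg_mul_sq_norm (by positivity),
    div_inv_eq_mul, show π * (4 * ε) = 4 * π * ε by ring, neg_div, rpow_neg hpos.le,
    inv_mul_cancel₀ (rpow_pos_of_pos hpos _).ne']

theorem integrable_heatKernel (hε : 0 < ε) : Integrable (heatKernel (V := V) ε) :=
  Integrable.of_integral_ne_zero (by rw [integral_heatKernel hε]; exact one_ne_zero)

theorem setIntegral_heatKernel_le_of_le_inner (hε : 0 < ε) {v : V} (hv : ‖v‖ = 1) {a : ℝ}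
    (ha : 0 ≤ a) : ∫ z in {z | a ≤ ⟪v, z⟫}, heatKernel ε z ≤ exp (-a ^ 2 / (4 * ε)) := by
  -- `1_{a ≤ ⟪v, z⟫} ≤ e^{t (⟪v, z⟫ - a)}`, and the factor `e^{t ⟪v, z⟫}` only translates `Φ_ε`
  set t := a / (2 * ε)
  have ht : 0 ≤ t := by positivity
  have hshift : ∀ z, heatKernel ε z * exp (t * ⟪v, z⟫) =
      exp (ε * t ^ 2) * heatKernel ε (z - (2 * ε * t) • v) := fun z => by
    rw [heatKernel_mul_exp_inner hε.ne', hv, one_pow, mul_one]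
  have hint : Integrable fun z => heatKernel ε z * exp (t * ⟪v, z⟫) := by
    simp only [hshift]
    exact ((integrable_heatKernel hε).comp_sub_right _).const_mul _
  have hmeas : MeasurableSet {z : V | a ≤ ⟪v, z⟫} :=
    measurableSet_le measurable_const (measurable_const.inner measurable_id)
  calc ∫ z in {z | a ≤ ⟪v, z⟫}, heatKernel ε z
      ≤ ∫ z in {z | a ≤ ⟪v, z⟫}, exp (-(t * a)) * (heatKernel ε z * exp (t * ⟪v, z⟫)) := by
        refine setIntegral_mono_on (integrable_heatKernel hε).integrableOn
          (hint.const_mul _).integrableOn hmeas fun z hz => ?_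
        have : 1 ≤ exp (-(t * a)) * exp (t * ⟪v, z⟫) := by
          rw [← exp_add]
          exact one_le_exp (by nlinarith [show a ≤ ⟪v, z⟫ from hz])
        nlinarith [heatKernel_nonneg hε.le z]
    _ ≤ ∫ z, exp (-(t * a)) * (heatKernel ε z * exp (t * ⟪v, z⟫)) :=
        setIntegral_le_integral (hint.const_mul _)
          (ae_of_all _ fun z => by have := heatKernel_nonneg hε.le z; positivity)
    _ = exp (-a ^ 2 / (4 * ε)) := by
        simp only [hshift]
        rw [integral_const_mul, integral_const_mul, integral_sub_right_eq_self,
          integral_heatKernel hε, mul_one, ← exp_add]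
        congr 1
        simp only [t]
        field_simp
        ring

theorem setIntegral_heatKernel_le_of_le_norm (hε : 0 < ε) {δ : ℝ} (hδ : 0 < δ) :
    ∫ z in {z : V | δ ≤ ‖z‖}, heatKernel ε z
      ≤ 2 * finrank ℝ V * exp (-δ ^ 2 / (4 * finrank ℝ V * ε)) := by
  set n := finrank ℝ V
  set b := stdOrthonormalBasis ℝ V
  set a := δ / √n
  have hnorm : ∀ w : V, ‖w‖ = 1 → ∫ z in {z | a ≤ ⟪w, z⟫}, heatKernel ε z
      ≤ exp (-δ ^ 2 / (4 * n * ε)) := fun w hw => by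
    convert setIntegral_heatKernel_le_of_le_inner hε hw (by positivity : 0 ≤ a) using 2
    rw [div_pow, sq_sqrt n.cast_nonneg, neg_div, neg_div, div_div]
    ring_nf
  -- pigeonhole on `‖z‖² = ∑ ⟪b i, z⟫²`; the `Bool` chooses the sign of the large coordinate
  have hcover : {z : V | δ ≤ ‖z‖} ⊆
      ⋃ p : Fin n × Bool, {z | a ≤ ⟪if p.2 then b p.1 else -b p.1, z⟫} := by
    intro z hz
    have hsq : δ ^ 2 ≤ ∑ i, ⟪b i, z⟫ ^ 2 := by
      rw [b.sum_sq_inner_right]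
      exact pow_le_pow_left₀ hδ.le hz 2
    have hne : (Finset.univ : Finset (Fin n)).Nonempty :=
      Finset.nonempty_of_sum_ne_zero (lt_of_lt_of_le (by positivity) hsq).ne'
    have hn : (n : ℝ) ≠ 0 :=
      Nat.cast_ne_zero.2 (Fin.pos_iff_nonempty.2 (Finset.univ_nonempty_iff.1 hne)).ne'
    obtain ⟨i, -, hi⟩ := Finset.exists_le_of_sum_le hne (f := fun _ => a ^ 2)
      (g := fun i => ⟪b i, z⟫ ^ 2) (by
        rw [Finset.sum_const, Finset.card_univ, Fintype.card_fin, nsmul_eq_mul, div_pow,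
          sq_sqrt n.cast_nonneg, mul_div_cancel₀ _ hn]
        exact hsq)
    have hi' : a ≤ |⟪b i, z⟫| := by
      simpa [abs_of_nonneg (by positivity : 0 ≤ a)] using sq_le_sq.1 hi
    rcases le_abs.1 hi' with h | h
    · exact mem_iUnion.2 ⟨(i, true), by simpa using h⟩
    · exact mem_iUnion.2 ⟨(i, false), by simpa [inner_neg_left] using h⟩
  calc ∫ z in {z : V | δ ≤ ‖z‖}, heatKernel ε z
      ≤ ∫ z in ⋃ p : Fin n × Bool, {z | a ≤ ⟪if p.2 then b p.1 else -b p.1, z⟫},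
          heatKernel ε z :=
        setIntegral_mono_set (integrable_heatKernel hε).integrableOn
          (ae_of_all _ (heatKernel_nonneg hε.le)) (Filter.Eventually.of_forall hcover)
    _ ≤ ∑ p : Fin n × Bool, ∫ z in {z | a ≤ ⟪if p.2 then b p.1 else -b p.1, z⟫},
          heatKernel ε z :=
        setIntegral_iUnion_le (heatKernel_nonneg hε.le) (integrable_heatKernel hε) _
    _ ≤ ∑ _p : Fin n × Bool, exp (-δ ^ 2 / (4 * n * ε)) :=
        Finset.sum_le_sum fun p _ => hnorm _ (by cases p.2 <;> simp [b.orthonormal.1 p.1])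
    _ = 2 * n * exp (-δ ^ 2 / (4 * n * ε)) := by
        rw [Finset.sum_const, Finset.card_univ, Fintype.card_prod, Fintype.card_fin,
          Fintype.card_bool, nsmul_eq_mul]
        push_cast
        ring

end HeatKernel

theorem stmt_16_general (d : ℕ) (ε : ℝ) (hε : ε ∈ Set.Ioo (0 : ℝ) 1)
    (μ : Measure (EuclideanSpace ℝ (Fin d))) [IsProbabilityMeasure μ]
    (r : ℝ) :
    (∫ y in Metric.ball (0 : EuclideanSpace ℝ (Fin d)) r,
        ∫ x, (4 * Real.pi * ε) ^ (-(d : ℝ) / 2) * Real.exp (-‖y - x‖ ^ 2 / (4 * ε)) ∂μ)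
      ≤ (μ (Metric.ball (0 : EuclideanSpace ℝ (Fin d)) (r + ε ^ ((1 : ℝ) / 3)))).toReal
        + 2 * d * Real.exp (-(ε ^ (-(1 : ℝ) / 3)) / (4 * d)) := by
  have hε0 : 0 < ε := hε.1
  have hkernel : ∀ z : EuclideanSpace ℝ (Fin d),
      (4 * π * ε) ^ (-(d : ℝ) / 2) * exp (-‖z‖ ^ 2 / (4 * ε)) = heatKernel ε z := by
    simp [heatKernel]
  have hexponent : -(ε ^ ((1 : ℝ) / 3)) ^ 2 / (4 * d * ε) = -(ε ^ (-(1 : ℝ) / 3)) / (4 * d) := by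
    rw [← rpow_natCast, ← rpow_mul hε0.le, show (1 / 3 : ℝ) * (2 : ℕ) = 1 + -1 / 3 by norm_num,
      rpow_add hε0, rpow_one, show 4 * (d : ℝ) * ε = ε * (4 * d) by ring, ← mul_neg,
      mul_div_mul_left _ _ hε0.ne']
  simp_rw [hkernel]
  refine (setIntegral_ball_integral_comp_sub_le (heatKernel_nonneg hε0.le)
    (integrable_heatKernel hε0) (continuous_heatKernel ε).measurable μ 0 r
    (ε ^ ((1 : ℝ) / 3))).trans ?_
  rw [integral_heatKernel hε0, mul_one, ← hexponent]
  gcongr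
  simpa using setIntegral_heatKernel_le_of_le_norm (V := EuclideanSpace ℝ (Fin d)) hε0
    (rpow_pos_of_pos hε0 _)

/-- For a probability measure `μ` on `ℝ^d`, the heat kernel `Φ_ε` at time `ε ∈ (0,1)`, and any
`r ≥ 0`, `∫_{B(r)} (Φ_ε * μ)(y) dy ≤ μ(B(r + ε^{1/3})) + 2 d e^{-ε^{-1/3}/(4d)}`. -/
theorem stmt_16 (d : ℕ) (hd : 0 < d) (ε : ℝ) (hε : ε ∈ Set.Ioo (0 : ℝ) 1)
    (μ : Measure (EuclideanSpace ℝ (Fin d))) [IsProbabilityMeasure μ]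
    (r : ℝ) (hr : 0 ≤ r) :
    (∫ y in Metric.ball (0 : EuclideanSpace ℝ (Fin d)) r,
        ∫ x, (4 * Real.pi * ε) ^ (-(d : ℝ) / 2) * Real.exp (-‖y - x‖ ^ 2 / (4 * ε)) ∂μ)
      ≤ (μ (Metric.ball (0 : EuclideanSpace ℝ (Fin d)) (r + ε ^ ((1 : ℝ) / 3)))).toReal
        + 2 * d * Real.exp (-(ε ^ (-(1 : ℝ) / 3)) / (4 * d)) :=
  stmt_16_general d ε hε μ r
end

section
/- Let (Y_n)_{n≥0} be a time-homogeneous Markov chain on a measurable state space S, let Λ' ⊆ S be measurable, and suppose sup_{x∈Λ'} E_x[τ_{Λ'}] = C < ∞ where τ_{Λ'} = inf{n ≥ 1 : Y_n ∈ Λ'}, and P_x(τ_{Λ'} < ∞) = 1 for all x. Define τ(0) = 0 and τ(k) = inf{n ≥ 1 + τ(k-1) : Y_n ∈ Λ'}. Suppose additionally there are n₁ ∈ ℕ and another measurable set Λ ⊆ Λ' with sup_{x∈Λ'} P_x(Y_{n₁} ∉ Λ) ≤ 1/2. Let k* = inf{k ≥ 1 : Y_{τ(k)+n₁} ∈ Λ}.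 Then for x ∈ Λ' and all k ∈ ℕ, P_x(k* > k) ≤ 2^{-⌊k/n₁⌋}, and E_x[τ(k*)] ≤ C Σ_{ℓ≥1} 2^{-⌊(ℓ-1-n₁)/n₁⌋} < ∞. -/
/-!
Call the `k`-th return a success if the chain is in `Λ` `n₁` steps after it. Whether the first
`k` returns all fail is decided by time `τ(k + n₁)`, and by the strong Markov property at
`τ(k + n₁)` the next return fails with probability at most `1/2`; hence
`P(k* > k + n₁) ≤ P(k* > k) / 2`, which iterates to `P(k* > k) ≤ 2^{-⌊k/n₁⌋}`.
For the expectation, write `τ(k*) = ∑_{ℓ < k*} (τ(ℓ+1) - τ(ℓ))`. The `ℓ`-th increment is a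
first return time started afresh at `τ(ℓ)`, and `{k* > ℓ} ⊆ {k* > ℓ - n₁}` is decided by time
`τ(ℓ)`, so the strong Markov property at `τ(ℓ)` bounds its contribution by
`C · P(k* > ℓ - n₁) ≤ C · 2^{-⌊(ℓ - n₁)/n₁⌋}`.
-/

open MeasureTheory
open scoped ENNReal

/-- The `k`-th return time to `Λ'` (with at least one step between successive returns);
`sInf` of an empty set is `0` by convention (the hypotheses make the relevant sets
almost surely nonempty). -/
noncomputable def retTime {S : Type*} (Λ' : Set S) (ω : ℕ → S) : ℕ → ℕ
  | 0 => 0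
  | k + 1 => sInf {n | retTime Λ' ω k + 1 ≤ n ∧ ω n ∈ Λ'}

open Set

namespace ReturnTimes

variable {S : Type*} {Λ Λ' : Set S} {n₁ : ℕ} {ω ω' : ℕ → S}

/-- The path starts in `Λ'` and its first `l` returns occur: strict increase excludes the junk
value `sInf ∅ = 0`. -/
def Returns (Λ' : Set S) (l : ℕ) (ω : ℕ → S) : Prop :=
  ω 0 ∈ Λ' ∧ ∀ j < l, retTime Λ' ω j < retTime Λ' ω (j + 1)

/-- The event `k* > k`. -/
def noEntryUpTo (Λ Λ' : Set S) (n₁ k : ℕ) : Set (ℕ → S) :=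
  {ω | ∀ l, 1 ≤ l → l ≤ k → ω (retTime Λ' ω l + n₁) ∉ Λ}

/-- The time `τ(k*)`, equal to `⊤` when `k* = ∞`. -/
noncomputable def entryTime (Λ Λ' : Set S) (n₁ : ℕ) (ω : ℕ → S) : ℝ≥0∞ :=
  ⨅ k ∈ {k : ℕ | 1 ≤ k ∧ ω (retTime Λ' ω k + n₁) ∈ Λ}, (retTime Λ' ω k : ℝ≥0∞)

noncomputable def firstReturn (Λ' : Set S) (ω : ℕ → S) : ℝ≥0∞ :=
  ⨅ n ∈ {n : ℕ | 1 ≤ n ∧ ω n ∈ Λ'}, (n : ℝ≥0∞)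

noncomputable def returnGap (Λ' : Set S) (l : ℕ) (ω : ℕ → S) : ℝ≥0∞ :=
  (retTime Λ' ω (l + 1) - retTime Λ' ω l : ℕ)

lemma noEntryUpTo_anti : Antitone (noEntryUpTo Λ Λ' n₁) :=
  fun _ _ hab _ hω l hl hlb => hω l hl (hlb.trans hab)

lemma retTime_succ_mem {j : ℕ} (h : retTime Λ' ω j < retTime Λ' ω (j + 1)) :
    ω (retTime Λ' ω (j + 1)) ∈ Λ' :=
  (Nat.sInf_mem (Nat.nonempty_of_pos_sInf (Nat.zero_lt_of_lt h))).2

lemma Returns.mono {k l : ℕ} (h : Returns Λ' l ω) (hkl : k ≤ l) : Returns Λ' k ω :=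
  ⟨h.1, fun j hj => h.2 j (hj.trans_le hkl)⟩

lemma Returns.mem {l j : ℕ} (h : Returns Λ' l ω) (hj : j ≤ l) : ω (retTime Λ' ω j) ∈ Λ' := by
  cases j with
  | zero => exact h.1
  | succ j => exact retTime_succ_mem (h.2 j hj)

lemma Returns.retTime_add_le {l i d j : ℕ} (h : Returns Λ' l ω) (hj : j ≤ l) (hij : i + d ≤ j) :
    retTime Λ' ω i + d ≤ retTime Λ' ω j := by
  induction j generalizing d with
  | zero => simp_all
  | succ j ih =>
    have hstep := h.2 j hj
    rcases d with _ | d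
    · rcases Nat.lt_or_ge i (j + 1) with hi | hi
      · have := ih (d := 0) (by omega) (by omega); omega
      · obtain rfl : i = j + 1 := by omega
        rfl
    · have := ih (d := d) (by omega) (by omega); omega

lemma Returns.le_retTime {l : ℕ} (h : Returns Λ' l ω) : l ≤ retTime Λ' ω l := by
  simpa [retTime] using h.retTime_add_le (i := 0) (d := l) le_rfl (zero_add l).le

lemma returns_of_frequently (h0 : ω 0 ∈ Λ') (h : ∀ m, ∃ n, m < n ∧ ω n ∈ Λ') (l : ℕ) :
    Returns Λ' l ω := by
  refine ⟨h0, fun j _ => ?_⟩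
  obtain ⟨n, hn, hnΛ'⟩ := h (retTime Λ' ω j)
  exact (Nat.sInf_mem (s := {n | retTime Λ' ω j + 1 ≤ n ∧ ω n ∈ Λ'}) ⟨n, hn, hnΛ'⟩).1

lemma _root_.Nat.sInf_eq_of_forall_le_mem_iff {s t : Set ℕ} (hs : s.Nonempty)
    (h : ∀ m ≤ sInf s, m ∈ s ↔ m ∈ t) : sInf t = sInf s := by
  have ht : sInf s ∈ t := (h _ le_rfl).1 (Nat.sInf_mem hs)
  refine le_antisymm (Nat.sInf_le ht) (not_lt.1 fun hlt => ?_)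
  exact Nat.notMem_of_lt_sInf hlt ((h _ hlt.le).2 (Nat.sInf_mem ⟨_, ht⟩))

lemma Returns.of_eqOn {n l : ℕ} (hω : ∀ i ≤ n, ω i = ω' i) (h : Returns Λ' l ω)
    (hl : retTime Λ' ω l ≤ n) :
    Returns Λ' l ω' ∧ ∀ j ≤ l, retTime Λ' ω' j = retTime Λ' ω j := by
  induction l with
  | zero => exact ⟨⟨hω 0 (Nat.zero_le n) ▸ h.1, fun _ hj => (Nat.not_lt_zero _ hj).elim⟩,
      fun j hj => by obtain rfl := Nat.le_zero.1 hj; rfl⟩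
  | succ l ih =>
    have hlt := h.2 l l.lt_succ_self
    obtain ⟨hR, heq⟩ := ih (h.mono l.le_succ) (hlt.le.trans hl)
    have hsucc : retTime Λ' ω' (l + 1) = retTime Λ' ω (l + 1) := by
      simp only [retTime, heq l le_rfl]
      refine Nat.sInf_eq_of_forall_le_mem_iff (Nat.nonempty_of_pos_sInf (Nat.zero_lt_of_lt hlt))
        fun m hm => ?_
      simp only [mem_ofPred_eq, hω m (hm.trans hl)]
    refine ⟨⟨hR.1, fun j hj => ?_⟩, fun j hj => ?_⟩
    · rcases Nat.lt_succ_iff_lt_or_eq.1 hj with hj | rfl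
      · exact hR.2 j hj
      · rw [hsucc, heq j le_rfl]; exact hlt
    · rcases Nat.le_succ_iff.1 hj with hj | rfl
      · exact heq j hj
      · exact hsucc

lemma mem_noEntryUpTo_inter_of_eqOn {b L n : ℕ} (hbL : b ≤ L - n₁) (hω : ∀ i ≤ n, ω i = ω' i)
    (h : ω ∈ noEntryUpTo Λ Λ' n₁ b ∩ {ω | Returns Λ' L ω} ∩ {ω | retTime Λ' ω L = n}) :
    ω' ∈ noEntryUpTo Λ Λ' n₁ b ∩ {ω | Returns Λ' L ω} ∩ {ω | retTime Λ' ω L = n} := by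
  obtain ⟨⟨hfail, hR⟩, hn⟩ := h
  obtain ⟨hR', heq⟩ := hR.of_eqOn hω hn.le
  refine ⟨⟨fun j hj hjb => ?_, hR'⟩, (heq L le_rfl).trans hn⟩
  rw [heq j (by omega), ← hω _ (hn ▸ hR.retTime_add_le le_rfl (by omega))]
  exact hfail j hj hjb

lemma dependsOn_noEntryUpTo_inter {b L : ℕ} (hbL : b ≤ L - n₁) (n : ℕ) :
    DependsOn (· ∈ noEntryUpTo Λ Λ' n₁ b ∩ {ω | Returns Λ' L ω} ∩ {ω | retTime Λ' ω L = n})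
      (Iic n) :=
  fun _ _ h => propext ⟨mem_noEntryUpTo_inter_of_eqOn hbL fun i hi => h i hi,
    mem_noEntryUpTo_inter_of_eqOn hbL fun i hi => (h i hi).symm⟩

lemma returnGap_le_firstReturn (l : ℕ) (ω : ℕ → S) :
    returnGap Λ' l ω ≤ firstReturn Λ' (fun j => ω (retTime Λ' ω l + j)) := by
  refine le_iInf₂ fun m hm => Nat.cast_le.2 ?_
  have : retTime Λ' ω (l + 1) ≤ retTime Λ' ω l + m :=
    Nat.sInf_le ⟨Nat.add_le_add_left hm.1 _, hm.2⟩
  omega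

/-- `τ(k*)` is the sum of the return gaps `τ(ℓ + 1) - τ(ℓ)` over `ℓ < k*`. -/
lemma entryTime_le_tsum (hR : ∀ l, Returns Λ' l ω) :
    entryTime Λ Λ' n₁ ω
      ≤ ∑' l, (noEntryUpTo Λ Λ' n₁ l ∩ {ω | Returns Λ' l ω}).indicator (returnGap Λ' l) ω := by
  classical
  have hmono : Monotone (retTime Λ' ω) :=
    monotone_nat_of_le_succ fun l => ((hR (l + 1)).2 l l.lt_succ_self).le
  have hsum : ∀ k, (∀ l < k, ω ∈ noEntryUpTo Λ Λ' n₁ l) → (retTime Λ' ω k : ℝ≥0∞)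
      ≤ ∑' l, (noEntryUpTo Λ Λ' n₁ l ∩ {ω | Returns Λ' l ω}).indicator (returnGap Λ' l) ω := by
    intro k hk
    calc (retTime Λ' ω k : ℝ≥0∞) = ∑ l ∈ Finset.range k, returnGap Λ' l ω := by
          simp only [returnGap]
          rw [← Nat.cast_sum, Finset.sum_range_tsub hmono]; rfl
      _ = ∑ l ∈ Finset.range k,
            (noEntryUpTo Λ Λ' n₁ l ∩ {ω | Returns Λ' l ω}).indicator (returnGap Λ' l) ω :=
          Finset.sum_congr rfl fun l hl =>
            (indicator_of_mem (s := noEntryUpTo Λ Λ' n₁ l ∩ {ω | Returns Λ' l ω})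
              ⟨hk l (Finset.mem_range.1 hl), hR l⟩ (returnGap Λ' l)).symm
      _ ≤ _ := ENNReal.sum_le_tsum _
  by_cases hentry : ∃ k, 1 ≤ k ∧ ω (retTime Λ' ω k + n₁) ∈ Λ
  · exact (iInf₂_le (Nat.find hentry) (Nat.find_spec hentry)).trans
      (hsum _ fun l hl j hj hjl hjΛ => Nat.find_min hentry (hjl.trans_lt hl) ⟨hj, hjΛ⟩)
  · push Not at hentry
    refine le_top.trans_eq (top_unique ?_).symm
    rw [← ENNReal.iSup_natCast]
    exact iSup_le fun k => (Nat.cast_le.2 (hR k).le_retTime).trans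
      (hsum k fun _ _ j hj _ => hentry j hj)

section Measurability

variable [MeasurableSpace S]

lemma _root_.measurable_sInf_setOf {Ω : Type*} [MeasurableSpace Ω] {p : Ω → ℕ → Prop}
    (hp : ∀ n, MeasurableSet {ω | p ω n}) : Measurable fun ω => sInf {n | p ω n} := by
  refine measurable_of_Iic fun n => ?_
  have : (fun ω => sInf {n | p ω n}) ⁻¹' Iic n = (⋃ m ≤ n, {ω | p ω m}) ∪ ⋂ m, {ω | ¬ p ω m} := by
    ext ω
    simp only [mem_preimage, mem_Iic, mem_union, mem_iUnion, mem_iInter, mem_ofPred_eq,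
      exists_prop]
    constructor
    · intro h
      by_cases hne : {n | p ω n}.Nonempty
      · exact Or.inl ⟨_, h, Nat.sInf_mem hne⟩
      · exact Or.inr fun m hm => hne ⟨m, hm⟩
    · rintro (⟨m, hm, hpm⟩ | h)
      · exact (Nat.sInf_le hpm).trans hm
      · simp [h]
  rw [this]
  exact (MeasurableSet.biUnion (to_countable _) fun m _ => hp m).union
    (MeasurableSet.iInter fun m => (hp m).compl)

lemma _root_.measurable_apply_of_measurable_index {τ : (ℕ → S) → ℕ} (hτ : Measurable τ) :
    Measurable fun ω : ℕ → S => ω (τ ω) :=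
  (measurable_from_prod_countable_left (f := fun p : (ℕ → S) × ℕ => p.1 p.2)
    fun n => measurable_pi_apply n).comp (measurable_id.prodMk hτ)

lemma measurable_retTime (hΛ' : MeasurableSet Λ') (k : ℕ) :
    Measurable fun ω : ℕ → S => retTime Λ' ω k := by
  induction k with
  | zero => exact measurable_const
  | succ k ih =>
    exact measurable_sInf_setOf fun n =>
      (ih (MeasurableSet.of_discrete (s := {m | m + 1 ≤ n}))).inter (measurable_pi_apply n hΛ')

lemma measurableSet_returns (hΛ' : MeasurableSet Λ') (l : ℕ) :
    MeasurableSet {ω : ℕ → S | Returns Λ' l ω} := by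
  simp only [Returns, ofPred_and, ofPred_forall]
  exact (measurable_pi_apply 0 hΛ').inter <| MeasurableSet.iInter fun j => MeasurableSet.iInter
    fun _ => measurableSet_lt (measurable_retTime hΛ' j) (measurable_retTime hΛ' (j + 1))

lemma measurableSet_noEntryUpTo (hΛ : MeasurableSet Λ) (hΛ' : MeasurableSet Λ') (k : ℕ) :
    MeasurableSet (noEntryUpTo Λ Λ' n₁ k) := by
  simp only [noEntryUpTo, ofPred_forall]
  exact MeasurableSet.iInter fun l => MeasurableSet.iInter fun _ => MeasurableSet.iInter fun _ =>
    (measurable_apply_of_measurable_index ((measurable_retTime hΛ' l).add_const n₁) hΛ).compl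

lemma measurable_firstReturn (hΛ' : MeasurableSet Λ') : Measurable (firstReturn (S := S) Λ') := by
  classical
  refine Measurable.iInf fun n => ?_
  simp only [iInf_eq_if]
  exact Measurable.ite ((MeasurableSet.const (1 ≤ n)).inter (measurable_pi_apply n hΛ'))
    measurable_const measurable_const

lemma measurable_returnGap (hΛ' : MeasurableSet Λ') (l : ℕ) :
    Measurable (returnGap (S := S) Λ' l) :=
  measurable_from_top.comp ((measurable_retTime hΛ' (l + 1)).sub (measurable_retTime hΛ' l))

end Measurability

section Markov

variable [MeasurableSpace S] {P : S → Measure (ℕ → S)} {x : S}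

/-- The Markov property at every time `n`, for the path laws `P y` of the chain started at `y`. -/
def IsMarkovFamily (P : S → Measure (ℕ → S)) : Prop :=
  ∀ (x : S) (n : ℕ) (f : (ℕ → S) → ℝ≥0∞), Measurable f →
    ∀ g : (Fin (n + 1) → S) → ℝ≥0∞, Measurable g →
      (∫⁻ ω, g (fun k => ω k) * (∫⁻ ω', f ω' ∂(P (ω n))) ∂(P x))
        = ∫⁻ ω, g (fun k => ω k) * f (fun j => ω (n + j)) ∂(P x)

lemma setLIntegral_comp_shift (hM : IsMarkovFamily P) (x : S) {n : ℕ} {B : Set (ℕ → S)}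
    (hB : MeasurableSet B) (hdep : DependsOn (· ∈ B) (Iic n)) {f : (ℕ → S) → ℝ≥0∞}
    (hf : Measurable f) :
    ∫⁻ ω in B, f (fun j => ω (n + j)) ∂(P x) = ∫⁻ ω in B, ∫⁻ ω', f ω' ∂(P (ω n)) ∂(P x) := by
  rcases B.eq_empty_or_nonempty with rfl | ⟨ω₀, -⟩
  · simp
  -- `B` is the cylinder over `extend ⁻¹' B`, where `extend` pads a path segment with `ω₀`.
  let extend : (Fin (n + 1) → S) → ℕ → S := fun v i => if h : i < n + 1 then v ⟨i, h⟩ else ω₀ i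
  have hextend : Measurable extend := measurable_pi_iff.2 fun i => by
    by_cases h : i < n + 1
    · simp only [extend, dif_pos h]; exact measurable_pi_apply _
    · simp only [extend, dif_neg h]; exact measurable_const
  have hcyl : ∀ ω : ℕ → S, (fun k : Fin (n + 1) => ω k) ∈ extend ⁻¹' B ↔ ω ∈ B := fun ω =>
    Iff.of_eq <| hdep fun i hi => by simp only [extend, dif_pos (Nat.lt_succ_of_le hi)]
  have := hM x n f hf _ (measurable_one.indicator (hextend hB))
  simp only [indicator, Pi.one_apply, ite_mul, one_mul, zero_mul] at this
  simp only [← lintegral_indicator hB, indicator]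
  convert this.symm using 4 <;> exact (hcyl _).symm

/-- Strong Markov bound at `τ`: `hdep` says that `B` is `ℱ_τ`-measurable. -/
lemma setLIntegral_comp_shift_le (hM : IsMarkovFamily P) (x : S) {τ : (ℕ → S) → ℕ}
    (hτ : Measurable τ) {B : Set (ℕ → S)} (hB : MeasurableSet B)
    (hdep : ∀ n, DependsOn (· ∈ B ∩ {ω | τ ω = n}) (Iic n)) {A : Set S}
    (hBA : ∀ ω ∈ B, ω (τ ω) ∈ A) {f : (ℕ → S) → ℝ≥0∞} (hf : Measurable f) {c : ℝ≥0∞}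
    (hc : ∀ y ∈ A, ∫⁻ ω, f ω ∂(P y) ≤ c) :
    ∫⁻ ω in B, f (fun j => ω (τ ω + j)) ∂(P x) ≤ c * P x B := by
  set Bn : ℕ → Set (ℕ → S) := fun n => B ∩ {ω | τ ω = n}
  have hBn : ∀ n, MeasurableSet (Bn n) := fun n => hB.inter (hτ (measurableSet_singleton n))
  have hdisj : Pairwise (Function.onFun Disjoint Bn) := fun i j hij =>
    disjoint_left.2 fun ω hi hj => hij (hi.2.symm.trans hj.2)
  have hU : ⋃ n, Bn n = B := by ext ω; simp [Bn]
  calc ∫⁻ ω in B, f (fun j => ω (τ ω + j)) ∂(P x)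
      = ∑' n, ∫⁻ ω in Bn n, f (fun j => ω (n + j)) ∂(P x) := by
        conv_lhs => rw [← hU]
        rw [lintegral_iUnion hBn hdisj]
        exact tsum_congr fun n => setLIntegral_congr_fun (hBn n) fun ω hω => by rw [hω.2]
    _ = ∑' n, ∫⁻ ω in Bn n, ∫⁻ ω', f ω' ∂(P (ω n)) ∂(P x) :=
        tsum_congr fun n => setLIntegral_comp_shift hM x (hBn n) (hdep n) hf
    _ ≤ ∑' n, c * P x (Bn n) := ENNReal.tsum_le_tsum fun n =>
        (setLIntegral_mono' (hBn n) fun ω hω => hω.2 ▸ hc _ (hBA ω hω.1)).trans_eq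
          (setLIntegral_const _ _)
    _ = c * P x B := by rw [ENNReal.tsum_mul_left, ← measure_iUnion hdisj hBn, hU]

lemma measure_inter_shift_notMem_le (hM : IsMarkovFamily P) (x : S) {τ : (ℕ → S) → ℕ}
    (hτ : Measurable τ) {B : Set (ℕ → S)} (hB : MeasurableSet B)
    (hdep : ∀ n, DependsOn (· ∈ B ∩ {ω | τ ω = n}) (Iic n)) (hBΛ' : ∀ ω ∈ B, ω (τ ω) ∈ Λ')
    (hΛ : MeasurableSet Λ) (hhalf : ∀ y ∈ Λ', P y {ω | ω n₁ ∉ Λ} ≤ 1 / 2) :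
    P x (B ∩ {ω | ω (τ ω + n₁) ∉ Λ}) ≤ 1 / 2 * P x B := by
  have hfail : MeasurableSet {ω : ℕ → S | ω n₁ ∉ Λ} := (measurable_pi_apply n₁ hΛ).compl
  have hfail' : MeasurableSet {ω : ℕ → S | ω (τ ω + n₁) ∉ Λ} :=
    (measurable_apply_of_measurable_index (hτ.add_const n₁) hΛ).compl
  calc P x (B ∩ {ω | ω (τ ω + n₁) ∉ Λ})
      = ∫⁻ ω in B, {ω : ℕ → S | ω n₁ ∉ Λ}.indicator 1 (fun j => ω (τ ω + j)) ∂(P x) := by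
        rw [inter_comm, ← Measure.restrict_apply' hB, ← lintegral_indicator_one hfail']; rfl
    _ ≤ 1 / 2 * P x B := setLIntegral_comp_shift_le hM x hτ hB hdep hBΛ'
        (measurable_one.indicator hfail) fun y hy => (lintegral_indicator_one hfail).trans_le
          (hhalf y hy)

lemma ae_exists_gt_mem (hM : IsMarkovFamily P) [IsProbabilityMeasure (P x)]
    (hΛ' : MeasurableSet Λ') (hfin : ∀ y, P y {ω | ∃ n, 1 ≤ n ∧ ω n ∈ Λ'} = 1) (m : ℕ) :
    ∀ᵐ ω ∂(P x), ∃ n, m < n ∧ ω n ∈ Λ' := by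
  set H : Set (ℕ → S) := {ω | ∃ n, 1 ≤ n ∧ ω n ∈ Λ'}
  have hH : MeasurableSet H := by
    simp only [H, ofPred_exists, ofPred_and]
    exact MeasurableSet.iUnion fun n => (MeasurableSet.const _).inter (measurable_pi_apply n hΛ')
  have hshift : Measurable fun (ω : ℕ → S) (j : ℕ) => ω (m + j) :=
    measurable_pi_lambda _ fun j => measurable_pi_apply _
  have hfull : P x ((fun ω j => ω (m + j)) ⁻¹' H) = 1 := by
    calc P x ((fun ω j => ω (m + j)) ⁻¹' H)
        = ∫⁻ ω, H.indicator 1 (fun j => ω (m + j)) ∂(P x) :=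
          (lintegral_indicator_one (hshift hH)).symm
      _ = ∫⁻ ω, ∫⁻ ω', H.indicator 1 ω' ∂(P (ω m)) ∂(P x) := by
          simpa using setLIntegral_comp_shift hM x MeasurableSet.univ (fun _ _ _ => rfl)
            (measurable_one.indicator hH)
      _ = 1 := by simp [lintegral_indicator_one hH, hfin]
  filter_upwards [(ae_mem_iff_measure_eq (hshift hH).nullMeasurableSet).2
    (hfull.trans measure_univ.symm)] with ω ⟨n, hn, hnΛ'⟩
  exact ⟨m + n, by omega, hnΛ'⟩

lemma ae_returns (hM : IsMarkovFamily P) [IsProbabilityMeasure (P x)]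
    (hstart : ∀ y, P y {ω | ω 0 = y} = 1) (hΛ' : MeasurableSet Λ')
    (hfin : ∀ y, P y {ω | ∃ n, 1 ≤ n ∧ ω n ∈ Λ'} = 1) (hx : x ∈ Λ') :
    ∀ᵐ ω ∂(P x), ∀ l, Returns Λ' l ω := by
  have h0 : P x {ω | ω 0 ∈ Λ'} = 1 :=
    le_antisymm prob_le_one <| (hstart x).symm.le.trans <|
      measure_mono fun ω (hω : ω 0 = x) => (hω ▸ hx : ω 0 ∈ Λ')
  filter_upwards [(ae_mem_iff_measure_eq (measurable_pi_apply 0 hΛ').nullMeasurableSet).2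
    (h0.trans measure_univ.symm), ae_all_iff.2 (ae_exists_gt_mem hM hΛ' hfin)]
    with ω h0 hvisit
  exact returns_of_frequently h0 hvisit

lemma measure_noEntryUpTo_add_le (hM : IsMarkovFamily P) (hR : ∀ᵐ ω ∂(P x), ∀ l, Returns Λ' l ω)
    (hΛ : MeasurableSet Λ) (hΛ' : MeasurableSet Λ') (hhalf : ∀ y ∈ Λ', P y {ω | ω n₁ ∉ Λ} ≤ 1 / 2)
    (hn₁ : 0 < n₁) (b : ℕ) :
    P x (noEntryUpTo Λ Λ' n₁ (b + n₁)) ≤ 1 / 2 * P x (noEntryUpTo Λ Λ' n₁ b) := by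
  set B := noEntryUpTo Λ Λ' n₁ b ∩ {ω | Returns Λ' (b + n₁) ω}
  calc P x (noEntryUpTo Λ Λ' n₁ (b + n₁))
      = P x (noEntryUpTo Λ Λ' n₁ (b + n₁) ∩ {ω | Returns Λ' (b + n₁) ω}) :=
        (measure_inter_conull (ae_iff.1 (hR.mono fun ω h => h (b + n₁)))).symm
    _ ≤ P x (B ∩ {ω | ω (retTime Λ' ω (b + n₁) + n₁) ∉ Λ}) :=
        measure_mono fun ω ⟨hω, hR⟩ =>
          ⟨⟨noEntryUpTo_anti (Nat.le_add_right b n₁) hω, hR⟩, hω _ (by omega) le_rfl⟩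
    _ ≤ 1 / 2 * P x B :=
        measure_inter_shift_notMem_le hM x (measurable_retTime hΛ' _)
          ((measurableSet_noEntryUpTo hΛ hΛ' b).inter (measurableSet_returns hΛ' _))
          (dependsOn_noEntryUpTo_inter (Nat.add_sub_cancel b n₁).ge)
          (fun ω hω => hω.2.mem le_rfl) hΛ hhalf
    _ ≤ 1 / 2 * P x (noEntryUpTo Λ Λ' n₁ b) := by gcongr; exact inter_subset_left

lemma measure_noEntryUpTo_le (hM : IsMarkovFamily P) [IsProbabilityMeasure (P x)]
    (hR : ∀ᵐ ω ∂(P x), ∀ l, Returns Λ' l ω) (hΛ : MeasurableSet Λ) (hΛ' : MeasurableSet Λ')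
    (hhalf : ∀ y ∈ Λ', P y {ω | ω n₁ ∉ Λ} ≤ 1 / 2) (hn₁ : 0 < n₁) (k : ℕ) :
    P x (noEntryUpTo Λ Λ' n₁ k) ≤ (1 / 2 : ℝ≥0∞) ^ (k / n₁) := by
  have hblock : ∀ m, P x (noEntryUpTo Λ Λ' n₁ (m * n₁)) ≤ (1 / 2 : ℝ≥0∞) ^ m := by
    intro m
    induction m with
    | zero => simpa using prob_le_one
    | succ m ih =>
      calc P x (noEntryUpTo Λ Λ' n₁ ((m + 1) * n₁))
          ≤ 1 / 2 * P x (noEntryUpTo Λ Λ' n₁ (m * n₁)) := by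
            rw [add_one_mul]
            exact measure_noEntryUpTo_add_le hM hR hΛ hΛ' hhalf hn₁ _
        _ ≤ (1 / 2) ^ (m + 1) := by rw [pow_succ']; gcongr
  exact (measure_mono (noEntryUpTo_anti (Nat.div_mul_le_self k n₁))).trans (hblock _)

lemma setLIntegral_returnGap_le (hM : IsMarkovFamily P) [IsProbabilityMeasure (P x)]
    (hR : ∀ᵐ ω ∂(P x), ∀ l, Returns Λ' l ω) (hΛ : MeasurableSet Λ) (hΛ' : MeasurableSet Λ')
    (hhalf : ∀ y ∈ Λ', P y {ω | ω n₁ ∉ Λ} ≤ 1 / 2) (hn₁ : 0 < n₁) {C : ℝ≥0∞}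
    (hret : ∀ y ∈ Λ', ∫⁻ ω, firstReturn Λ' ω ∂(P y) ≤ C) (l : ℕ) :
    ∫⁻ ω in noEntryUpTo Λ Λ' n₁ l ∩ {ω | Returns Λ' l ω}, returnGap Λ' l ω ∂(P x)
      ≤ C * (1 / 2 : ℝ≥0∞) ^ ((l - n₁) / n₁) := by
  set B := noEntryUpTo Λ Λ' n₁ (l - n₁) ∩ {ω | Returns Λ' l ω}
  have hB : MeasurableSet B :=
    (measurableSet_noEntryUpTo hΛ hΛ' _).inter (measurableSet_returns hΛ' l)
  calc ∫⁻ ω in noEntryUpTo Λ Λ' n₁ l ∩ {ω | Returns Λ' l ω}, returnGap Λ' l ω ∂(P x)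
      ≤ ∫⁻ ω in B, returnGap Λ' l ω ∂(P x) :=
        lintegral_mono_set (inter_subset_inter_left _ (noEntryUpTo_anti (Nat.sub_le l n₁)))
    _ ≤ ∫⁻ ω in B, firstReturn Λ' (fun j => ω (retTime Λ' ω l + j)) ∂(P x) :=
        lintegral_mono (returnGap_le_firstReturn l)
    _ ≤ C * P x B :=
        setLIntegral_comp_shift_le hM x (measurable_retTime hΛ' l) hB
          (dependsOn_noEntryUpTo_inter le_rfl) (fun ω hω => hω.2.mem le_rfl)
          (measurable_firstReturn hΛ') hret
    _ ≤ C * (1 / 2 : ℝ≥0∞) ^ ((l - n₁) / n₁) := by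
        gcongr
        exact (measure_mono inter_subset_left).trans
          (measure_noEntryUpTo_le hM hR hΛ hΛ' hhalf hn₁ _)

lemma lintegral_entryTime_le (hM : IsMarkovFamily P) [IsProbabilityMeasure (P x)]
    (hR : ∀ᵐ ω ∂(P x), ∀ l, Returns Λ' l ω) (hΛ : MeasurableSet Λ) (hΛ' : MeasurableSet Λ')
    (hhalf : ∀ y ∈ Λ', P y {ω | ω n₁ ∉ Λ} ≤ 1 / 2) (hn₁ : 0 < n₁) {C : ℝ≥0∞}
    (hret : ∀ y ∈ Λ', ∫⁻ ω, firstReturn Λ' ω ∂(P y) ≤ C) :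
    ∫⁻ ω, entryTime Λ Λ' n₁ ω ∂(P x) ≤ C * ∑' l : ℕ, (1 / 2 : ℝ≥0∞) ^ ((l - n₁) / n₁) := by
  have hA : ∀ l, MeasurableSet (noEntryUpTo Λ Λ' n₁ l ∩ {ω | Returns Λ' l ω}) := fun l =>
    (measurableSet_noEntryUpTo hΛ hΛ' l).inter (measurableSet_returns hΛ' l)
  calc ∫⁻ ω, entryTime Λ Λ' n₁ ω ∂(P x)
      ≤ ∫⁻ ω, ∑' l, (noEntryUpTo Λ Λ' n₁ l ∩ {ω | Returns Λ' l ω}).indicator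
          (returnGap Λ' l) ω ∂(P x) :=
        lintegral_mono_ae (hR.mono fun ω hω => entryTime_le_tsum hω)
    _ = ∑' l, ∫⁻ ω in noEntryUpTo Λ Λ' n₁ l ∩ {ω | Returns Λ' l ω}, returnGap Λ' l ω ∂(P x) := by
        rw [lintegral_tsum fun l => ((measurable_returnGap hΛ' l).indicator (hA l)).aemeasurable]
        exact tsum_congr fun l => lintegral_indicator (hA l) _
    _ ≤ C * ∑' l : ℕ, (1 / 2 : ℝ≥0∞) ^ ((l - n₁) / n₁) := by
        rw [← ENNReal.tsum_mul_left]
        exact ENNReal.tsum_le_tsum (setLIntegral_returnGap_le hM hR hΛ hΛ' hhalf hn₁ hret)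

end Markov

lemma half_pow_le_two_zpow {n₁ : ℕ} (hn₁ : 0 < n₁) (l : ℕ) :
    (1 / 2 : ℝ≥0∞) ^ ((l - n₁) / n₁) ≤ (2 : ℝ≥0∞) ^ (-(((l : ℤ) - (n₁ : ℤ)) / (n₁ : ℤ))) := by
  have hdiv : ((l : ℤ) - n₁) / n₁ ≤ (((l - n₁) / n₁ : ℕ) : ℤ) := by
    rw [Int.natCast_ediv]
    exact Int.ediv_le_ediv (by exact_mod_cast hn₁) (by omega)
  calc (1 / 2 : ℝ≥0∞) ^ ((l - n₁) / n₁) = 2 ^ (-(((l - n₁) / n₁ : ℕ) : ℤ)) := by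
        rw [ENNReal.zpow_neg, zpow_natCast, one_div, ENNReal.inv_pow]
    _ ≤ _ := ENNReal.zpow_le_of_le one_le_two (neg_le_neg hdiv)

end ReturnTimes

open ReturnTimes

theorem stmt_18_general {S : Type*} [MeasurableSpace S]
    (P : S → Measure (ℕ → S)) (hP : ∀ x, IsProbabilityMeasure (P x))
    (hstart : ∀ x, P x {ω | ω 0 = x} = 1)
    (hMarkov : ∀ (x : S) (n : ℕ) (f : (ℕ → S) → ℝ≥0∞), Measurable f →
      ∀ g : (Fin (n + 1) → S) → ℝ≥0∞, Measurable g →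
      (∫⁻ ω, g (fun k => ω k) * (∫⁻ ω', f ω' ∂(P (ω n))) ∂(P x))
        = ∫⁻ ω, g (fun k => ω k) * f (fun j => ω (n + j)) ∂(P x))
    (Λ Λ' : Set S) (hΛm : MeasurableSet Λ) (hΛ'm : MeasurableSet Λ')
    (C : ℝ≥0∞)
    (hret : ∀ x ∈ Λ', (∫⁻ ω, (⨅ n ∈ {n : ℕ | 1 ≤ n ∧ ω n ∈ Λ'}, (n : ℝ≥0∞)) ∂(P x)) ≤ C)
    (hfin : ∀ x : S, P x {ω | ∃ n, 1 ≤ n ∧ ω n ∈ Λ'} = 1)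
    (n₁ : ℕ) (hn₁ : 0 < n₁)
    (hhalf : ∀ x ∈ Λ', P x {ω | ω n₁ ∉ Λ} ≤ 1 / 2)
    (x : S) (hx : x ∈ Λ') :
    (∀ k : ℕ, P x {ω | ∀ l : ℕ, 1 ≤ l → l ≤ k → ω (retTime Λ' ω l + n₁) ∉ Λ}
        ≤ (1 / 2 : ℝ≥0∞) ^ (k / n₁)) ∧
    (∫⁻ ω, (⨅ k ∈ {k : ℕ | 1 ≤ k ∧ ω (retTime Λ' ω k + n₁) ∈ Λ},
        (retTime Λ' ω k : ℝ≥0∞)) ∂(P x))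
      ≤ C * ∑' l : ℕ, (2 : ℝ≥0∞) ^ (-(((l : ℤ) - (n₁ : ℤ)) / (n₁ : ℤ))) := by
  have := hP x
  have hR := ae_returns hMarkov hstart hΛ'm hfin hx
  refine ⟨measure_noEntryUpTo_le hMarkov hR hΛm hΛ'm hhalf hn₁, ?_⟩
  calc _ ≤ C * ∑' l : ℕ, (1 / 2 : ℝ≥0∞) ^ ((l - n₁) / n₁) :=
        lintegral_entryTime_le hMarkov hR hΛm hΛ'm hhalf hn₁ hret
    _ ≤ _ := by gcongr with l; exact half_pow_le_two_zpow hn₁ l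

/-- Let `(Y_n)` be a Markov chain on `S` with laws `P x` started at `x`. Suppose returns to
`Λ'` have expectation at most `C` uniformly over starting points in `Λ'` and are a.s. finite,
and from any point of `Λ'` the chain is in `Λ ⊆ Λ'` after `n₁` steps with probability `≥ 1/2`.
Let `τ(k)` be the `k`-th return time to `Λ'` and `k* = inf {k ≥ 1 : Y_{τ(k)+n₁} ∈ Λ}`. Then
for `x ∈ Λ'`: `P_x(k* > k) ≤ 2^{-⌊k/n₁⌋}` for all `k`, and
`E_x[τ(k*)] ≤ C Σ_{ℓ≥1} 2^{-⌊(ℓ-1-n₁)/n₁⌋} < ∞`. -/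
theorem stmt_18 {S : Type*} [MeasurableSpace S]
    (P : S → Measure (ℕ → S)) (hP : ∀ x, IsProbabilityMeasure (P x))
    (hstart : ∀ x, P x {ω | ω 0 = x} = 1)
    (hMarkov : ∀ (x : S) (n : ℕ) (f : (ℕ → S) → ℝ≥0∞), Measurable f →
      ∀ g : (Fin (n + 1) → S) → ℝ≥0∞, Measurable g →
      (∫⁻ ω, g (fun k => ω k) * (∫⁻ ω', f ω' ∂(P (ω n))) ∂(P x))
        = ∫⁻ ω, g (fun k => ω k) * f (fun j => ω (n + j)) ∂(P x))
    (Λ Λ' : Set S) (hΛm : MeasurableSet Λ) (hΛ'm : MeasurableSet Λ') (hsub : Λ ⊆ Λ')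
    (C : ℝ≥0∞) (hC : C ≠ ⊤)
    (hret : ∀ x ∈ Λ', (∫⁻ ω, (⨅ n ∈ {n : ℕ | 1 ≤ n ∧ ω n ∈ Λ'}, (n : ℝ≥0∞)) ∂(P x)) ≤ C)
    (hfin : ∀ x : S, P x {ω | ∃ n, 1 ≤ n ∧ ω n ∈ Λ'} = 1)
    (n₁ : ℕ) (hn₁ : 0 < n₁)
    (hhalf : ∀ x ∈ Λ', P x {ω | ω n₁ ∉ Λ} ≤ 1 / 2)
    (x : S) (hx : x ∈ Λ') :
    (∀ k : ℕ, P x {ω | ∀ l : ℕ, 1 ≤ l → l ≤ k → ω (retTime Λ' ω l + n₁) ∉ Λ}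
        ≤ (1 / 2 : ℝ≥0∞) ^ (k / n₁)) ∧
    (∫⁻ ω, (⨅ k ∈ {k : ℕ | 1 ≤ k ∧ ω (retTime Λ' ω k + n₁) ∈ Λ},
        (retTime Λ' ω k : ℝ≥0∞)) ∂(P x))
      ≤ C * ∑' l : ℕ, (2 : ℝ≥0∞) ^ (-(((l : ℤ) - (n₁ : ℤ)) / (n₁ : ℤ))) :=
  stmt_18_general P hP hstart hMarkov Λ Λ' hΛm hΛ'm C hret hfin n₁ hn₁ hhalf x hx
end
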